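/- arXiv:2206.10069 — 10 statements merged into one kernel-verified Lean document; each statement's English description precedes it below -/
import Mathlib

section
/- Let d ≥ 1 be an integer and let ε > 0, a > 0, b > 0 and c ∈ ℝ. Then the integral ∫_{{x ∈ ℝ^d : |x| > ε}} cos²(|x|^a + c)/|x|^b dx is finite if and only if b > d. -/
open MeasureTheory Set Real

/-!
In polar coordinates the integral becomes `∫_ε^∞ r^(d-1-b) cos²(r^a + c) dr`, which converges
for `b > d` by comparison with `r^(d-1-b)`. For `b ≤ d` the substitution `u = r^a` turns it into
`∫ u^m cos²(u + c) du` with `m ≥ -1`, and this diverges: shifting `u` by `π/2` exchanges `cos²`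
and `sin²`, so its convergence would force that of `∫ u⁻¹ (cos² + sin²)(u + c) du = ∫ u⁻¹ du`.
-/

theorem integrableOn_fun_norm_addHaar_Ioi {E F : Type*} [NormedAddCommGroup E]
    [NormedSpace ℝ E] [MeasurableSpace E] [BorelSpace E] [FiniteDimensional ℝ E] [Nontrivial E]
    [NormedAddCommGroup F] [NormedSpace ℝ F] (μ : Measure E) [μ.IsAddHaarMeasure]
    {f : ℝ → F} {r : ℝ} (hr : 0 ≤ r) :
    IntegrableOn (fun x : E ↦ f ‖x‖) {x | r < ‖x‖} μ ↔
      IntegrableOn (fun y ↦ y ^ (Module.finrank ℝ E - 1) • f y) (Ioi r) := by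
  have hind : {x : E | r < ‖x‖}.indicator (fun x ↦ f ‖x‖) = fun x ↦ (Ioi r).indicator f ‖x‖ :=
    funext fun x ↦ rfl
  rw [← integrable_indicator_iff (measurableSet_lt measurable_const measurable_norm), hind,
    integrable_fun_norm_addHaar, ← indicator_smul, integrableOn_indicator_iff measurableSet_Ioi,
    Ioi_inter_Ioi, sup_of_le_left hr]

theorem integrableOn_Ioi_comp_rpow_iff_of_pos {E : Type*} [NormedAddCommGroup E]
    [NormedSpace ℝ E] (f : ℝ → E) {a ε : ℝ} (ha : 0 < a) (hε : 0 ≤ ε) :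
    IntegrableOn (fun x ↦ x ^ (a - 1) • f (x ^ a)) (Ioi ε) ↔ IntegrableOn f (Ioi (ε ^ a)) := by
  have hIoi {t : ℝ} {g : ℝ → E} (ht : 0 ≤ t) :
      IntegrableOn ((Ioi t).indicator g) (Ioi 0) ↔ IntegrableOn g (Ioi t) := by
    rw [integrableOn_indicator_iff measurableSet_Ioi, Ioi_inter_Ioi, sup_of_le_left ht]
  rw [← hIoi (rpow_nonneg hε a), ← integrableOn_Ioi_comp_rpow_iff' _ ha.ne', ← hIoi hε]
  refine integrableOn_congr_fun (fun x (hx : 0 < x) ↦ ?_) measurableSet_Ioi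
  simp only [indicator, mem_Ioi, rpow_lt_rpow_iff hε hx.le ha]
  split_ifs <;> simp

theorem not_integrableOn_Ioi_inv_mul_cos_sq (c A : ℝ) :
    ¬ IntegrableOn (fun u ↦ u⁻¹ * cos (u + c) ^ 2) (Ioi A) := by
  intro h
  set B := max A (π / 2)
  have hB : IntegrableOn (fun u ↦ u⁻¹ * cos (u + c) ^ 2) (Ioi B) :=
    h.mono_set (Ioi_subset_Ioi (le_max_left _ _))
  have hshift : IntegrableOn (fun u ↦ (u + π / 2)⁻¹ * cos (u + π / 2 + c) ^ 2) (Ioi B) := by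
    have := ((measurePreserving_add_right volume (π / 2)).integrableOn_comp_preimage
      (measurableEmbedding_addRight (π / 2))).2 hB
    rw [preimage_add_const_Ioi] at this
    exact this.mono_set (Ioi_subset_Ioi (by linarith [pi_pos]))
  apply not_integrableOn_Ioi_inv (a := B)
  refine (hB.add (hshift.const_mul 2)).mono' measurable_inv.aestronglyMeasurable ?_
  filter_upwards [ae_restrict_mem measurableSet_Ioi] with u hu
  have hu : π / 2 < u := (le_max_right _ _).trans_lt hu
  have hu0 : 0 < u := by linarith [pi_pos]
  have hcos : cos (u + π / 2 + c) ^ 2 = sin (u + c) ^ 2 := by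
    rw [add_right_comm, cos_add_pi_div_two, neg_sq]
  have hinv : u⁻¹ ≤ 2 * (u + π / 2)⁻¹ := by
    rw [← div_eq_mul_inv, le_div_iff₀ (by positivity)]
    field_simp
    linarith
  simp only [Pi.add_apply, norm_inv, norm_of_nonneg hu0.le, hcos]
  calc u⁻¹ = u⁻¹ * cos (u + c) ^ 2 + u⁻¹ * sin (u + c) ^ 2 := by
        rw [← mul_add, cos_sq_add_sin_sq, mul_one]
    _ ≤ u⁻¹ * cos (u + c) ^ 2 + 2 * ((u + π / 2)⁻¹ * sin (u + c) ^ 2) := by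
        rw [← mul_assoc]; gcongr

theorem not_integrableOn_Ioi_rpow_mul_cos_sq {m : ℝ} (hm : -1 ≤ m) (c A : ℝ) :
    ¬ IntegrableOn (fun u ↦ u ^ m * cos (u + c) ^ 2) (Ioi A) := by
  intro h
  apply not_integrableOn_Ioi_inv_mul_cos_sq c (max A 1)
  refine (h.mono_set (Ioi_subset_Ioi (le_max_left _ _))).mono' (by fun_prop) ?_
  filter_upwards [ae_restrict_mem measurableSet_Ioi] with u hu
  have hu : 1 ≤ u := ((le_max_right _ _).trans_lt hu).le
  rw [norm_of_nonneg (by positivity), ← rpow_neg_one]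
  gcongr

theorem integrableOn_Ioi_rpow_mul_cos_sq_rpow_add_iff {s a c ε : ℝ} (ha : 0 < a) (hε : 0 < ε) :
    IntegrableOn (fun r ↦ r ^ s * cos (r ^ a + c) ^ 2) (Ioi ε) ↔ s < -1 := by
  refine ⟨fun h ↦ ?_, fun hs ↦ ?_⟩
  · by_contra! hs
    set m := (s + 1) / a - 1
    have hm : -1 ≤ m := by
      have : 0 ≤ (s + 1) / a := div_nonneg (by linarith) ha.le
      linarith
    refine not_integrableOn_Ioi_rpow_mul_cos_sq hm c (ε ^ a) ?_
    rw [← integrableOn_Ioi_comp_rpow_iff_of_pos _ ha hε.le]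
    refine h.congr_fun (fun r (hr : ε < r) ↦ ?_) measurableSet_Ioi
    have hr : 0 < r := hε.trans hr
    have hexp : a - 1 + a * m = s := by
      simp only [m]
      field_simp
      ring
    rw [smul_eq_mul, ← rpow_mul hr.le, ← mul_assoc, ← rpow_add hr, hexp]
  · refine (integrableOn_Ioi_rpow_of_lt hs hε).mono' (by fun_prop) ?_
    filter_upwards [ae_restrict_mem measurableSet_Ioi] with r (hr : ε < r)
    have hr : 0 ≤ r := hε.le.trans hr.le
    rw [norm_of_nonneg (by positivity)]
    exact mul_le_of_le_one_right (rpow_nonneg hr s) (by simpa using cos_sq_le_one (r ^ a + c))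

theorem integrable_cos_sq_div_norm_rpow_iff_general
    (d : ℕ) (hd : 1 ≤ d) (ε a b c : ℝ) (hε : 0 < ε) (ha : 0 < a) :
    MeasureTheory.IntegrableOn
      (fun x : EuclideanSpace ℝ (Fin d) => Real.cos (‖x‖ ^ a + c) ^ 2 / ‖x‖ ^ b)
      {x : EuclideanSpace ℝ (Fin d) | ε < ‖x‖} ↔ (d : ℝ) < b := by
  have : Nonempty (Fin d) := ⟨⟨0, hd⟩⟩
  have hradial : ∀ r ∈ Ioi ε, r ^ (d - 1) • (cos (r ^ a + c) ^ 2 / r ^ b) =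
      r ^ ((d : ℝ) - 1 - b) * cos (r ^ a + c) ^ 2 := fun r (hr : ε < r) ↦ by
    have hr : 0 < r := hε.trans hr
    rw [smul_eq_mul, rpow_sub hr, ← rpow_natCast, Nat.cast_sub hd, Nat.cast_one]
    ring
  rw [integrableOn_fun_norm_addHaar_Ioi volume (f := fun r ↦ cos (r ^ a + c) ^ 2 / r ^ b) hε.le,
    finrank_euclideanSpace_fin, integrableOn_congr_fun hradial measurableSet_Ioi,
    integrableOn_Ioi_rpow_mul_cos_sq_rpow_add_iff ha hε]
  constructor <;> intro h <;> linarith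

theorem integrable_cos_sq_div_norm_rpow_iff
    (d : ℕ) (hd : 1 ≤ d) (ε a b c : ℝ) (hε : 0 < ε) (ha : 0 < a) (hb : 0 < b) :
    MeasureTheory.IntegrableOn
      (fun x : EuclideanSpace ℝ (Fin d) => Real.cos (‖x‖ ^ a + c) ^ 2 / ‖x‖ ^ b)
      {x : EuclideanSpace ℝ (Fin d) | ε < ‖x‖} ↔ (d : ℝ) < b :=
  integrable_cos_sq_div_norm_rpow_iff_general d hd ε a b c hε ha
end

section
/- Let θ > −1, κ > 0, and let u₀ ∈ ℝ. Suppose η : [0,∞) → ℝ is continuous and satisfies the Volterra integral equation η(t) = u₀² + κ ∫_0^t (t−s)^θ η(s) ds for all t ≥ 0. Then for all t ≥ 0, η(t) = u₀² · E_{θ+1}(κ Γ(θ+1) t^{θ+1}). -/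
/-- The two-parameter Mittag-Leffler function `E_{a,b}(z) = ∑_{k=0}^∞ z^k / Γ(a k + b)`. -/
noncomputable def mittagLeffler (a b z : ℝ) : ℝ :=
  ∑' k : ℕ, z ^ k / Real.Gamma (a * k + b)

open MeasureTheory Filter Set intervalIntegral

lemma rpow_const_continuous {p : ℝ} (hp : 0 ≤ p) : Continuous fun x : ℝ => x ^ p :=
  continuous_iff_continuousAt.mpr fun x => Real.continuousAt_rpow_const x p (Or.inr hp)

lemma real_beta {p q : ℝ} (hp : 0 < p) (hq : 0 < q) :
    ∫ x in (0:ℝ)..1, x ^ (p - 1) * (1 - x) ^ (q - 1) =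
      Real.Gamma p * Real.Gamma q / Real.Gamma (p + q) := by
  have h := Complex.Gamma_mul_Gamma_eq_betaIntegral (s := (p : ℂ)) (t := (q : ℂ))
    (by simpa using hp) (by simpa using hq)
  have hB : Complex.betaIntegral (p : ℂ) (q : ℂ) =
      ((∫ x in (0:ℝ)..1, x ^ (p - 1) * (1 - x) ^ (q - 1) : ℝ) : ℂ) := by
    rw [Complex.betaIntegral, ← intervalIntegral.integral_ofReal]
    apply intervalIntegral.integral_congr
    intro x hx
    rw [Set.uIcc_of_le (by norm_num : (0:ℝ) ≤ 1)] at hx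
    show (x:ℂ) ^ ((p:ℂ)-1) * (1-(x:ℂ)) ^ ((q:ℂ)-1) = ((x ^ (p-1) * (1-x)^(q-1) : ℝ) : ℂ)
    symm
    rw [Complex.ofReal_mul, Complex.ofReal_cpow hx.1,
      Complex.ofReal_cpow (by linarith [hx.2] : (0:ℝ) ≤ 1 - x)]
    push_cast
    ring_nf
  rw [hB, Complex.Gamma_ofReal, Complex.Gamma_ofReal, ← Complex.ofReal_add,
    Complex.Gamma_ofReal, ← Complex.ofReal_mul, ← Complex.ofReal_mul] at h
  have h' : Real.Gamma p * Real.Gamma q =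
      Real.Gamma (p + q) * ∫ x in (0:ℝ)..1, x ^ (p - 1) * (1 - x) ^ (q - 1) := by
    exact_mod_cast h
  have hΓ : Real.Gamma (p + q) ≠ 0 := (Real.Gamma_pos_of_pos (by linarith)).ne'
  field_simp [hΓ] at h' ⊢
  linarith [h']

lemma kernel_integrable {θ : ℝ} (hθ : -1 < θ) {t : ℝ} (ht : 0 ≤ t) {g : ℝ → ℝ}
    (hg : ContinuousOn g (Set.Icc 0 t)) :
    IntervalIntegrable (fun s => (t - s) ^ θ * g s) volume 0 t := by
  have h1 : IntervalIntegrable (fun s : ℝ => s ^ θ) volume 0 t :=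
    intervalIntegral.intervalIntegrable_rpow' hθ
  have h2 := (h1.comp_sub_left t)
  simp only [sub_zero, sub_self] at h2
  exact h2.symm.mul_continuousOn (by rwa [Set.uIcc_of_le ht])

lemma beta_scaled {θ : ℝ} (hθ : -1 < θ) {p : ℝ} (hp : 0 ≤ p) {t : ℝ} (ht : 0 ≤ t) :
    ∫ s in (0:ℝ)..t, (t - s) ^ θ * s ^ p =
      Real.Gamma (θ + 1) * Real.Gamma (p + 1) / Real.Gamma (θ + p + 2) * t ^ (θ + p + 1) := by
  rcases ht.eq_or_lt with h | h
  · rw [← h]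
    simp [Real.zero_rpow ((by linarith : (0:ℝ) < θ + p + 1).ne')]
  · have key := intervalIntegral.smul_integral_comp_mul_left
      (f := fun s => (t - s) ^ θ * s ^ p) (a := 0) (b := 1) t
    rw [mul_zero, mul_one] at key
    rw [← key]
    have hcongr : ∫ x in (0:ℝ)..1, (t - t * x) ^ θ * (t * x) ^ p
        = ∫ x in (0:ℝ)..1, (t ^ θ * t ^ p) * (x ^ ((p+1) - 1) * (1 - x) ^ ((θ+1) - 1)) := by
      apply intervalIntegral.integral_congr
      intro x hx
      rw [Set.uIcc_of_le (by norm_num : (0:ℝ) ≤ 1)] at hx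
      have h1 : t - t * x = t * (1 - x) := by ring
      show (t - t * x) ^ θ * (t * x) ^ p
        = t ^ θ * t ^ p * (x ^ (p + 1 - 1) * (1 - x) ^ (θ + 1 - 1))
      rw [h1, Real.mul_rpow h.le (by linarith [hx.2]), Real.mul_rpow h.le hx.1]
      ring_nf
    rw [hcongr, intervalIntegral.integral_const_mul, real_beta (by linarith) (by linarith)]
    have ht3 : t * (t ^ θ * t ^ p) = t ^ (θ + p + 1) := by
      rw [← Real.rpow_add h, show t * t ^ (θ + p) = t ^ (1:ℝ) * t ^ (θ + p) by
        rw [Real.rpow_one], ← Real.rpow_add h]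
      ring_nf
    have harg : p + 1 + (θ + 1) = θ + p + 2 := by ring
    rw [smul_eq_mul, harg]
    rw [show Real.Gamma (θ+1) * Real.Gamma (p+1) / Real.Gamma (θ+p+2) * t ^ (θ+p+1)
      = t * (t ^ θ * t ^ p) * (Real.Gamma (p+1) * Real.Gamma (θ+1) / Real.Gamma (θ+p+2))
      from by rw [ht3]; ring]
    ring

lemma tendsto_pow_div_gamma {a : ℝ} (ha : 0 < a) {z : ℝ} (hz : 0 ≤ z) :
    Tendsto (fun n : ℕ => z ^ n / Real.Gamma (a * n + 1)) atTop (nhds 0) := by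
  set y : ℝ := max 1 (z ^ (1 / a)) with hy
  have hy1 : 1 ≤ y := le_max_left _ _
  have hy0 : (0:ℝ) ≤ y := by linarith
  have hzy : z ≤ y ^ a := by
    calc z = (z ^ (1 / a)) ^ a := by
          rw [← Real.rpow_mul hz, one_div_mul_cancel ha.ne', Real.rpow_one]
      _ ≤ y ^ a := Real.rpow_le_rpow (Real.rpow_nonneg hz _) (le_max_right _ _) ha.le
  have hmulT : Tendsto (fun n : ℕ => a * (n : ℝ)) atTop atTop :=
    (tendsto_natCast_atTop_atTop (R := ℝ)).const_mul_atTop ha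
  have hfloor : Tendsto (fun n : ℕ => ⌊a * (n : ℝ)⌋₊) atTop atTop :=
    tendsto_nat_floor_atTop.comp hmulT
  have hbase : Tendsto (fun k : ℕ => y * (y ^ k / (k.factorial : ℝ))) atTop (nhds 0) := by
    simpa using (FloorSemiring.tendsto_pow_div_factorial_atTop y).const_mul y
  have hmain := hbase.comp hfloor
  apply squeeze_zero' (Eventually.of_forall fun n => by positivity) _ hmain
  filter_upwards [hmulT.eventually_ge_atTop 2] with n hn
  set m := ⌊a * (n : ℝ)⌋₊ with hm
  have hman : (m : ℝ) ≤ a * n := Nat.floor_le (by linarith)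
  have hanm : a * n < (m : ℝ) + 1 := Nat.lt_floor_add_one _
  have hΓ : (m.factorial : ℝ) ≤ Real.Gamma (a * n + 1) := by
    rw [← Real.Gamma_nat_eq_factorial m]
    have h2m : (2:ℝ) ≤ (m:ℝ) + 1 := by
      have : (2:ℕ) ≤ m := Nat.le_floor (by exact_mod_cast hn)
      have : (2:ℝ) ≤ (m:ℝ) := by exact_mod_cast this
      linarith
    exact Real.Gamma_strictMonoOn_Ici.monotoneOn (Set.mem_Ici.2 h2m)
      (Set.mem_Ici.2 (by linarith)) (by linarith)
  have hz_le : z ^ n ≤ y ^ (m + 1) := by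
    calc z ^ n ≤ (y ^ a) ^ n := pow_le_pow_left₀ hz hzy n
      _ = y ^ (a * (n : ℝ)) := by
          rw [← Real.rpow_natCast (y ^ a) n, ← Real.rpow_mul hy0]
      _ ≤ y ^ (((m + 1 : ℕ) : ℝ)) := by
          apply Real.rpow_le_rpow_of_exponent_le hy1
          push_cast; linarith
      _ = y ^ (m + 1) := Real.rpow_natCast y (m + 1)
  calc z ^ n / Real.Gamma (a * n + 1) ≤ y ^ (m + 1) / (m.factorial : ℝ) := by
        apply div_le_div₀ (by positivity) hz_le (by positivity) hΓ
    _ = y * (y ^ m / (m.factorial : ℝ)) := by rw [pow_succ]; ring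

theorem volterra_constant_initial_data
    (θ κ u₀ : ℝ) (hθ : -1 < θ) (hκ : 0 < κ)
    (η : ℝ → ℝ) (hcont : ContinuousOn η (Set.Ici 0))
    (heq : ∀ t ≥ (0:ℝ), η t = u₀ ^ 2 + κ * ∫ s in (0:ℝ)..t, (t - s) ^ θ * η s) :
    ∀ t ≥ (0:ℝ),
      η t = u₀ ^ 2 * mittagLeffler (θ + 1) 1 (κ * Real.Gamma (θ + 1) * t ^ (θ + 1)) := by
  intro t ht
  set a : ℝ := θ + 1 with ha_def
  have ha : 0 < a := by simp only [ha_def]; linarith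
  have hΓa : 0 < Real.Gamma a := Real.Gamma_pos_of_pos ha
  set C : ℝ := κ * Real.Gamma a with hC_def
  have hC : 0 < C := mul_pos hκ hΓa
  have hΓpos : ∀ k : ℕ, 0 < Real.Gamma (a * k + 1) :=
    fun k => Real.Gamma_pos_of_pos (by positivity)
  set c : ℕ → ℝ := fun k => C ^ k / Real.Gamma (a * k + 1) with hc_def
  have hcpos : ∀ k, 0 < c k := fun k => div_pos (pow_pos hC k) (hΓpos k)
  set P : ℕ → ℝ → ℝ := fun n s => u₀ ^ 2 * ∑ k ∈ Finset.range n, c k * s ^ (a * k)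
    with hP_def
  have hPcont : ∀ n, Continuous (P n) := by
    intro n
    apply continuous_const.mul
    apply continuous_finset_sum
    intro k _
    exact continuous_const.mul (rpow_const_continuous (by positivity))
  obtain ⟨M, hM⟩ := (isCompact_Icc (a := (0:ℝ)) (b := t)).exists_bound_of_continuousOn
    (hcont.mono (Set.Icc_subset_Ici_self))
  have hM0 : 0 ≤ M := le_trans (norm_nonneg _) (hM 0 ⟨le_refl 0, ht⟩)
  -- the key induction
  have key : ∀ n, ∀ x ∈ Set.Icc (0:ℝ) t,
      |η x - P n x| ≤ M * C ^ n * x ^ (a * n) / Real.Gamma (a * n + 1) := by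
    intro n
    induction n with
    | zero =>
      intro x hx
      have : P 0 x = 0 := by simp [hP_def]
      rw [this, sub_zero]
      simpa [Real.Gamma_one] using hM x hx
    | succ n ih =>
      intro x hx
      obtain ⟨hx0, hxt⟩ := hx
      have hIcc : Set.Icc (0:ℝ) x ⊆ Set.Icc 0 t := Set.Icc_subset_Icc_right hxt
      have hηc : ContinuousOn η (Set.Icc 0 x) := hcont.mono Set.Icc_subset_Ici_self
      have hint1 : IntervalIntegrable (fun s => (x - s) ^ θ * η s) volume 0 x :=
        kernel_integrable hθ hx0 hηc
      have hint2 : IntervalIntegrable (fun s => (x - s) ^ θ * P n s) volume 0 x :=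
        kernel_integrable hθ hx0 (hPcont n).continuousOn
      -- single-term identity
      have term : ∀ k : ℕ, κ * (c k * ∫ s in (0:ℝ)..x, (x - s) ^ θ * s ^ (a * k))
          = c (k + 1) * x ^ (a * (k + 1)) := by
        intro k
        rw [beta_scaled hθ (by positivity) hx0]
        have e1 : θ + a * k + 1 = a * (k + 1) := by push_cast [ha_def]; ring
        have e2 : θ + a * k + 2 = a * (k + 1) + 1 := by push_cast [ha_def]; ring
        have e3 : a * (k:ℝ) + 1 = a * k + 1 := by norm_num
        rw [e1, e2]
        simp only [hc_def]
        push_cast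
        have h1 := (hΓpos k).ne'
        have h2 : Real.Gamma (a * ((k:ℝ) + 1) + 1) ≠ 0 :=
          (Real.Gamma_pos_of_pos (by positivity)).ne'
        field_simp
        rw [hC_def, ha_def]
        ring
      -- the iterated identity
      have hPiter : κ * ∫ s in (0:ℝ)..x, (x - s) ^ θ * P n s = P (n + 1) x - u₀ ^ 2 := by
        have hrw : ∫ s in (0:ℝ)..x, (x - s) ^ θ * P n s
            = ∑ k ∈ Finset.range n,
                (u₀ ^ 2 * c k) * ∫ s in (0:ℝ)..x, (x - s) ^ θ * s ^ (a * k) := by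
          have hptw : EqOn (fun s => (x - s) ^ θ * P n s)
              (fun s => ∑ k ∈ Finset.range n, (u₀ ^ 2 * c k) * ((x - s) ^ θ * s ^ (a * k)))
              (Set.uIcc 0 x) := by
            intro s _
            simp only [hP_def, Finset.mul_sum]
            apply Finset.sum_congr rfl
            intro k _
            ring
          rw [intervalIntegral.integral_congr hptw]
          rw [intervalIntegral.integral_finset_sum]
          · simp only [intervalIntegral.integral_const_mul]
          · intro k _
            exact (kernel_integrable hθ hx0
              (rpow_const_continuous (show (0:ℝ) ≤ a * k by positivity)).continuousOn).const_mul
              (u₀ ^ 2 * c k)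
        rw [hrw, Finset.mul_sum]
        have hterms : ∀ k ∈ Finset.range n,
            κ * ((u₀ ^ 2 * c k) * ∫ s in (0:ℝ)..x, (x - s) ^ θ * s ^ (a * k))
              = u₀ ^ 2 * (c (k + 1) * x ^ (a * ((k:ℝ) + 1))) := by
          intro k _
          have := term k
          push_cast at this
          rw [← this]
          ring
        rw [Finset.sum_congr rfl hterms]
        simp only [hP_def]
        rw [Finset.sum_range_succ']
        have hc0 : c 0 * x ^ (a * ((0:ℕ):ℝ)) = 1 := by
          simp [hc_def, Real.Gamma_one]
        push_cast
        push_cast at hc0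
        rw [mul_add, hc0, mul_one, ← Finset.mul_sum, add_sub_cancel_right, Finset.mul_sum]
      -- the recursive identity for the error
      have hsub : η x - P (n + 1) x = κ * ∫ s in (0:ℝ)..x, (x - s) ^ θ * (η s - P n s) := by
        have hintegrand : EqOn (fun s => (x - s) ^ θ * (η s - P n s))
            (fun s => (x - s) ^ θ * η s - (x - s) ^ θ * P n s) (Set.uIcc 0 x) :=
          fun s _ => by ring
        rw [intervalIntegral.integral_congr hintegrand,
          intervalIntegral.integral_sub hint1 hint2, mul_sub, hPiter, heq x hx0]
        ring
      rw [hsub]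
      have habs : |κ * ∫ s in (0:ℝ)..x, (x - s) ^ θ * (η s - P n s)|
          ≤ κ * ∫ s in (0:ℝ)..x, |(x - s) ^ θ * (η s - P n s)| := by
        rw [abs_mul, abs_of_pos hκ]
        exact mul_le_mul_of_nonneg_left
          (intervalIntegral.abs_integral_le_integral_abs hx0) hκ.le
      set K : ℝ := M * C ^ n / Real.Gamma (a * n + 1) with hK_def
      have hK0 : 0 ≤ K := by positivity
      have hcont2 : ContinuousOn (fun s => η s - P n s) (Set.Icc 0 x) :=
        hηc.sub (hPcont n).continuousOn
      have hint3 : IntervalIntegrable (fun s => |(x - s) ^ θ * (η s - P n s)|) volume 0 x :=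
        (kernel_integrable hθ hx0 hcont2).abs
      have hint4 : IntervalIntegrable (fun s => (x - s) ^ θ * (K * s ^ (a * n))) volume 0 x :=
        kernel_integrable hθ hx0
          (continuous_const.mul (rpow_const_continuous (by positivity))).continuousOn
      have hmono : ∫ s in (0:ℝ)..x, |(x - s) ^ θ * (η s - P n s)|
          ≤ ∫ s in (0:ℝ)..x, (x - s) ^ θ * (K * s ^ (a * n)) := by
        apply intervalIntegral.integral_mono_on hx0 hint3 hint4
        intro s hs
        rw [abs_mul, abs_of_nonneg (Real.rpow_nonneg (sub_nonneg.2 hs.2) θ)]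
        apply mul_le_mul_of_nonneg_left _ (Real.rpow_nonneg (sub_nonneg.2 hs.2) θ)
        calc |η s - P n s| ≤ M * C ^ n * s ^ (a * n) / Real.Gamma (a * n + 1) :=
              ih s (hIcc hs)
          _ = K * s ^ (a * n) := by rw [hK_def]; ring
      have hrhs : ∫ s in (0:ℝ)..x, (x - s) ^ θ * (K * s ^ (a * n))
          = K * (Real.Gamma (θ + 1) * Real.Gamma (a * n + 1) / Real.Gamma (θ + a * n + 2)
              * x ^ (θ + a * n + 1)) := by
        have hptw : EqOn (fun s => (x - s) ^ θ * (K * s ^ (a * n)))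
            (fun s => K * ((x - s) ^ θ * s ^ (a * n))) (Set.uIcc 0 x) := fun s _ => by ring
        rw [intervalIntegral.integral_congr hptw, intervalIntegral.integral_const_mul,
          beta_scaled hθ (by positivity) hx0]
      have hfinal : κ * (K * (Real.Gamma (θ + 1) * Real.Gamma (a * n + 1)
            / Real.Gamma (θ + a * n + 2) * x ^ (θ + a * n + 1)))
          = M * C ^ (n + 1) * x ^ (a * (n + 1 : ℕ)) / Real.Gamma (a * (n + 1 : ℕ) + 1) := by
        have e1 : θ + a * n + 1 = a * ((n:ℝ) + 1) := by rw [ha_def]; ring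
        have e2 : θ + a * n + 2 = a * ((n:ℝ) + 1) + 1 := by rw [ha_def]; ring
        rw [e1, e2, hK_def]
        push_cast
        have h1 := (hΓpos n).ne'
        have h2 : Real.Gamma (a * ((n:ℝ) + 1) + 1) ≠ 0 :=
          (Real.Gamma_pos_of_pos (by positivity)).ne'
        field_simp
        rw [hC_def, ha_def]
        ring
      calc |κ * ∫ s in (0:ℝ)..x, (x - s) ^ θ * (η s - P n s)|
          ≤ κ * ∫ s in (0:ℝ)..x, |(x - s) ^ θ * (η s - P n s)| := habs
        _ ≤ κ * ∫ s in (0:ℝ)..x, (x - s) ^ θ * (K * s ^ (a * n)) :=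
            mul_le_mul_of_nonneg_left hmono hκ.le
        _ = M * C ^ (n + 1) * x ^ (a * (n + 1 : ℕ)) / Real.Gamma (a * (n + 1 : ℕ) + 1) := by
            rw [hrhs, hfinal]
  -- pass to the limit at x = t
  set z : ℝ := C * t ^ a with hz_def
  have hz0 : 0 ≤ z := by positivity
  have hzk : ∀ k : ℕ, z ^ k = C ^ k * t ^ (a * k) := by
    intro k
    rw [hz_def, mul_pow, ← Real.rpow_natCast (t ^ a) k, ← Real.rpow_mul ht]
  set f : ℕ → ℝ := fun k => u₀ ^ 2 * (c k * t ^ (a * k)) with hf_def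
  have hf0 : ∀ k, 0 ≤ f k := fun k =>
    mul_nonneg (sq_nonneg u₀) (mul_nonneg (hcpos k).le (Real.rpow_nonneg ht _))
  have hPt : ∀ n, P n t = ∑ k ∈ Finset.range n, f k := by
    intro n
    simp only [hP_def, hf_def, Finset.mul_sum]
  have hεlim : Tendsto (fun n : ℕ => M * (z ^ n / Real.Gamma (a * n + 1))) atTop (nhds 0) := by
    simpa using (tendsto_pow_div_gamma ha hz0).const_mul M
  have hPlim : Tendsto (fun n => ∑ k ∈ Finset.range n, f k) atTop (nhds (η t)) := by
    rw [tendsto_iff_dist_tendsto_zero]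
    apply squeeze_zero (fun n => dist_nonneg) _ hεlim
    intro n
    rw [Real.dist_eq, ← hPt n, abs_sub_comm]
    calc |η t - P n t| ≤ M * C ^ n * t ^ (a * n) / Real.Gamma (a * n + 1) :=
          key n t ⟨ht, le_refl t⟩
      _ = M * (z ^ n / Real.Gamma (a * n + 1)) := by rw [hzk n]; ring
  have hmonoS : Monotone fun n => ∑ k ∈ Finset.range n, f k := by
    intro m n hmn
    exact Finset.sum_le_sum_of_subset_of_nonneg (Finset.range_subset_range.2 hmn)
      (fun i _ _ => hf0 i)
  have hsummable : Summable f :=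
    summable_of_sum_range_le hf0 (fun n => hmonoS.ge_of_tendsto hPlim n)
  have hηt : η t = ∑' k, f k :=
    tendsto_nhds_unique hPlim hsummable.hasSum.tendsto_sum_nat
  rw [hηt]
  calc (∑' k, f k) = ∑' k : ℕ, u₀ ^ 2 * (z ^ k / Real.Gamma (a * k + 1)) :=
        tsum_congr fun k => by
          simp only [hf_def, hc_def]
          rw [hzk k]
          ring
    _ = u₀ ^ 2 * mittagLeffler a 1 z := by
        rw [tsum_mul_left]
        rfl
end

section
/- Let θ > −1, κ > 0, and let u₀, u₁ ∈ ℝ. Suppose η : [0,∞) → ℝ is continuous and satisfies the Volterra integral equation η(t) = (u₀ + u₁ t)² + κ ∫_0^t (t−s)^θ η(s) ds for all t ≥ 0. Then for all t ≥ 0, writing x = κ Γ(θ+1) t^{θ+1}, one has η(t) = u₀² E_{θ+1}(x) + 2 u₀ u₁ t · E_{θ+1,2}(x) + 2 u₁² t² · E_{θ+1,3}(x). -/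
open Real Set Filter Topology MeasureTheory

lemma sub_one_rpow_mul_Gamma_le_Gamma_add {x a : ℝ} (hx : 1 < x) (ha : 0 < a) :
    (x - 1) ^ a * Gamma x ≤ Gamma (x + a) := by
  have hΓx : 0 < Gamma x := Gamma_pos_of_pos (by linarith)
  have hΓx' : 0 < Gamma (x - 1) := Gamma_pos_of_pos (by linarith)
  have hlog_step : log (Gamma x) - log (Gamma (x - 1)) = log (x - 1) := by
    have : Gamma x = (x - 1) * Gamma (x - 1) := by
      simpa using Gamma_add_one (s := x - 1) (by linarith)
    rw [this, log_mul (by linarith) hΓx'.ne', add_sub_cancel_right]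
  have hslope := convexOn_log_Gamma.slope_mono_adjacent (x := x - 1) (y := x) (z := x + a)
    (by simp; linarith) (by simp; linarith) (by linarith) (by linarith)
  simp only [Function.comp, sub_sub_cancel, div_one, add_sub_cancel_left, hlog_step] at hslope
  rw [le_div_iff₀ ha] at hslope
  rw [← log_le_log_iff (by positivity) (Gamma_pos_of_pos (by linarith)),
    log_mul (by positivity) hΓx.ne', log_rpow (by linarith)]
  linarith

lemma summable_pow_div_Gamma {a b : ℝ} (ha : 0 < a) (hb : 0 < b) (z : ℝ) :
    Summable (fun k : ℕ => z ^ k / Gamma (a * k + b)) := by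
  refine summable_of_ratio_norm_eventually_le (r := 1 / 2) (by norm_num) ?_
  have hgrow : Tendsto (fun k : ℕ => (a * k + b - 1) ^ a) atTop atTop := by
    refine (tendsto_rpow_atTop ha).comp (tendsto_atTop_add_const_right _ _ ?_)
    exact (tendsto_natCast_atTop_atTop.const_mul_atTop ha).atTop_add tendsto_const_nhds
  filter_upwards [hgrow.eventually_ge_atTop (2 * |z|),
    (tendsto_natCast_atTop_atTop (R := ℝ)).eventually_ge_atTop (1 / a)] with k hk hk'
  have hx : 1 < a * k + b := by
    rw [div_le_iff₀ ha] at hk'; linarith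
  have hΓ : 0 < Gamma (a * k + b) := Gamma_pos_of_pos (by linarith)
  have hΓ' : 0 < Gamma (a * ↑(k + 1) + b) := Gamma_pos_of_pos (by positivity)
  have hratio : 2 * |z| * Gamma (a * k + b) ≤ Gamma (a * ↑(k + 1) + b) :=
    calc 2 * |z| * Gamma (a * k + b) ≤ (a * k + b - 1) ^ a * Gamma (a * k + b) := by gcongr
      _ ≤ Gamma (a * k + b + a) := sub_one_rpow_mul_Gamma_le_Gamma_add hx ha
      _ = Gamma (a * ↑(k + 1) + b) := by push_cast; ring_nf
  rw [norm_div, norm_div, norm_pow, norm_pow, norm_of_nonneg hΓ.le, norm_of_nonneg hΓ'.le,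
    div_le_iff₀ hΓ', pow_succ]
  calc ‖z‖ ^ k * ‖z‖ = ‖z‖ ^ k / Gamma (a * k + b) * (|z| * Gamma (a * k + b)) := by
        rw [norm_eq_abs]; field_simp
    _ ≤ ‖z‖ ^ k / Gamma (a * k + b) * (Gamma (a * ↑(k + 1) + b) / 2) := by gcongr; linarith
    _ = _ := by ring

lemma integral_sub_rpow_mul_rpow {θ p t : ℝ} (hθ : -1 < θ) (hp : -1 < p) (ht : 0 < t) :
    ∫ s in (0:ℝ)..t, (t - s) ^ θ * s ^ p
      = Gamma (θ + 1) * Gamma (p + 1) / Gamma (θ + p + 2) * t ^ (θ + p + 1) := by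
  have hbeta := Complex.betaIntegral_scaled (p + 1 : ℂ) (θ + 1 : ℂ) ht
  rw [Complex.betaIntegral_eq_Gamma_mul_div _ _ (by simp; linarith) (by simp; linarith)] at hbeta
  apply Complex.ofReal_injective
  rw [← intervalIntegral.integral_ofReal]
  convert hbeta using 1
  · refine intervalIntegral.integral_congr fun s hs => ?_
    rw [uIcc_of_le ht.le] at hs
    simp only [add_sub_cancel_right]
    rw [Complex.ofReal_mul, Complex.ofReal_cpow (by linarith [hs.2]),
      Complex.ofReal_cpow hs.1, Complex.ofReal_sub, mul_comm]
  · have h2 : (p + 1 + (θ + 1) : ℂ) = ((θ + p + 2 : ℝ) : ℂ) := by push_cast; ring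
    have h1 : (p + 1 + (θ + 1) - 1 : ℂ) = ((θ + p + 1 : ℝ) : ℂ) := by push_cast; ring
    rw [h1, h2, ← Complex.ofReal_cpow ht.le]
    simp only [← Complex.ofReal_one, ← Complex.ofReal_add, Complex.Gamma_ofReal]
    push_cast
    ring

lemma integral_sub_rpow_mul_rpow_div_Gamma {θ p q t : ℝ} (hθ : -1 < θ) (hp : 0 ≤ p)
    (hq : q = θ + p + 1) (ht : 0 ≤ t) :
    ∫ s in (0:ℝ)..t, (t - s) ^ θ * (s ^ p / Gamma (p + 1))
      = Gamma (θ + 1) * (t ^ q / Gamma (q + 1)) := by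
  subst hq
  rcases ht.eq_or_lt with rfl | ht
  · rw [intervalIntegral.integral_same, zero_rpow (by linarith), zero_div, mul_zero]
  have hΓp : Gamma (p + 1) ≠ 0 := (Gamma_pos_of_pos (by linarith)).ne'
  simp_rw [← mul_div_assoc]
  rw [intervalIntegral.integral_div, integral_sub_rpow_mul_rpow hθ (by linarith) ht,
    show θ + p + 1 + 1 = θ + p + 2 by ring]
  field_simp

lemma intervalIntegrable_sub_rpow_mul {θ t : ℝ} (hθ : -1 < θ) (ht : 0 ≤ t) {f : ℝ → ℝ}
    (hf : ContinuousOn f (Icc 0 t)) :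
    IntervalIntegrable (fun s => (t - s) ^ θ * f s) volume 0 t := by
  have hker : IntervalIntegrable (fun s => (t - s) ^ θ) volume 0 t := by
    simpa using
      ((intervalIntegral.intervalIntegrable_rpow' (a := 0) (b := t) hθ).comp_sub_left t).symm
  exact hker.mul_continuousOn (by rwa [uIcc_of_le ht])

noncomputable def volterraOp (θ κ : ℝ) (f : ℝ → ℝ) (t : ℝ) : ℝ :=
  κ * ∫ s in (0:ℝ)..t, (t - s) ^ θ * f s

section volterraOp

variable {θ κ t : ℝ} {f g : ℝ → ℝ}

lemma volterraOp_add (hθ : -1 < θ) (ht : 0 ≤ t) (hf : ContinuousOn f (Icc 0 t))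
    (hg : ContinuousOn g (Icc 0 t)) :
    volterraOp θ κ (fun s => f s + g s) t = volterraOp θ κ f t + volterraOp θ κ g t := by
  simp only [volterraOp, mul_add]
  rw [intervalIntegral.integral_add (intervalIntegrable_sub_rpow_mul hθ ht hf)
    (intervalIntegrable_sub_rpow_mul hθ ht hg), mul_add]

lemma volterraOp_sub (hθ : -1 < θ) (ht : 0 ≤ t) (hf : ContinuousOn f (Icc 0 t))
    (hg : ContinuousOn g (Icc 0 t)) :
    volterraOp θ κ (fun s => f s - g s) t = volterraOp θ κ f t - volterraOp θ κ g t := by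
  simp only [volterraOp, mul_sub]
  rw [intervalIntegral.integral_sub (intervalIntegrable_sub_rpow_mul hθ ht hf)
    (intervalIntegrable_sub_rpow_mul hθ ht hg), mul_sub]

lemma volterraOp_const_mul (c : ℝ) :
    volterraOp θ κ (fun s => c * f s) t = c * volterraOp θ κ f t := by
  simp only [volterraOp, mul_left_comm _ c, intervalIntegral.integral_const_mul]

lemma abs_volterraOp_le (hθ : -1 < θ) (ht : 0 ≤ t) (hf : ContinuousOn f (Icc 0 t))
    (hg : ContinuousOn g (Icc 0 t)) (hfg : ∀ s ∈ Icc 0 t, |f s| ≤ g s) :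
    |volterraOp θ κ f t| ≤ volterraOp θ |κ| g t := by
  rw [volterraOp, volterraOp, abs_mul]
  gcongr
  refine (intervalIntegral.abs_integral_le_integral_abs ht).trans
    (intervalIntegral.integral_mono_on ht (intervalIntegrable_sub_rpow_mul hθ ht hf).abs
      (intervalIntegrable_sub_rpow_mul hθ ht hg) fun s hs => ?_)
  have hker : 0 ≤ (t - s) ^ θ := rpow_nonneg (by linarith [hs.2]) θ
  rw [abs_mul, abs_of_nonneg hker]
  exact mul_le_mul_of_nonneg_left (hfg s hs) hker

end volterraOp

/-- The `k`-th iterate of `volterraOp θ κ` applied to `t ↦ t^j / Γ(j + 1)`. -/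
noncomputable def volterraMonomial (θ κ j : ℝ) (k : ℕ) (t : ℝ) : ℝ :=
  (κ * Gamma (θ + 1)) ^ k * (t ^ ((θ + 1) * k + j) / Gamma ((θ + 1) * k + j + 1))

section volterraMonomial

variable {θ κ j : ℝ}

lemma continuous_volterraMonomial (hθ : -1 < θ) (hj : 0 ≤ j) (k : ℕ) :
    Continuous (volterraMonomial θ κ j k) := by
  have : 0 ≤ (θ + 1) * k + j := add_nonneg (mul_nonneg (by linarith) k.cast_nonneg) hj
  unfold volterraMonomial
  fun_prop (disch := assumption)

lemma volterraOp_volterraMonomial (hθ : -1 < θ) (hj : 0 ≤ j) (k : ℕ) {t : ℝ} (ht : 0 ≤ t) :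
    volterraOp θ κ (volterraMonomial θ κ j k) t = volterraMonomial θ κ j (k + 1) t := by
  have hp : 0 ≤ (θ + 1) * k + j := add_nonneg (mul_nonneg (by linarith) k.cast_nonneg) hj
  simp only [volterraOp, volterraMonomial, mul_left_comm _ ((κ * Gamma (θ + 1)) ^ k),
    intervalIntegral.integral_const_mul]
  rw [integral_sub_rpow_mul_rpow_div_Gamma (q := (θ + 1) * ↑(k + 1) + j) hθ hp
    (by push_cast; ring) ht]
  ring

lemma hasSum_volterraMonomial (hθ : -1 < θ) (hj : 0 ≤ j) {t : ℝ} (ht : 0 ≤ t) :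
    HasSum (fun k => volterraMonomial θ κ j k t)
      (t ^ j * mittagLeffler (θ + 1) (j + 1) (κ * Gamma (θ + 1) * t ^ (θ + 1))) := by
  have hterm : ∀ k : ℕ, volterraMonomial θ κ j k t
      = t ^ j * ((κ * Gamma (θ + 1) * t ^ (θ + 1)) ^ k / Gamma ((θ + 1) * k + (j + 1))) := by
    intro k
    rw [volterraMonomial, rpow_add_of_nonneg ht (mul_nonneg (by linarith) k.cast_nonneg) hj,
      rpow_mul ht, rpow_natCast, mul_pow, add_assoc]
    ring
  simp only [hterm]
  exact ((summable_pow_div_Gamma (by linarith) (by linarith) _).hasSum).mul_left _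

end volterraMonomial

theorem tendsto_sum_of_eq_add_volterraOp {θ κ : ℝ} (hθ : -1 < θ) {η : ℝ → ℝ}
    (hη : ContinuousOn η (Ici 0)) {T : ℕ → ℝ → ℝ} (hT : ∀ k, ContinuousOn (T k) (Ici 0))
    (hη_eq : ∀ t ≥ 0, η t = T 0 t + volterraOp θ κ η t)
    (hT_succ : ∀ k, ∀ t ≥ 0, volterraOp θ κ (T k) t = T (k + 1) t) {t : ℝ} (ht : 0 ≤ t) :
    Tendsto (fun n => ∑ k ∈ Finset.range n, T k t) atTop (𝓝 (η t)) := by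
  set R : ℕ → ℝ → ℝ := fun n s => η s - ∑ k ∈ Finset.range n, T k s with hR
  have hR_cont : ∀ n s, ContinuousOn (R n) (Icc 0 s) := fun n s =>
    (hη.sub (continuousOn_finsetSum _ fun k _ => hT k)).mono Icc_subset_Ici_self
  have hR_zero : R 0 = η := by simp [hR]
  have hR_succ : ∀ n, R (n + 1) = fun s => R n s - T n s := fun n => by
    simp only [hR, Finset.sum_range_succ, sub_sub]
  have hR_volterra : ∀ n, ∀ s ≥ 0, R (n + 1) s = volterraOp θ κ (R n) s := by
    intro n
    induction n with
    | zero => intro s hs; simp [hR_succ, hR_zero, hη_eq s hs]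
    | succ n ih =>
      intro s hs
      rw [hR_succ (n + 1), hR_succ n, volterraOp_sub hθ hs (hR_cont n s)
        ((hT n).mono Icc_subset_Ici_self), ← ih s hs, hT_succ n s hs, hR_succ n]
  obtain ⟨M, hM⟩ := (isCompact_Icc (a := 0) (b := t)).exists_bound_of_continuousOn
    (hη.mono Icc_subset_Ici_self)
  have hR_le : ∀ n, ∀ s ∈ Icc 0 t, |R n s| ≤ M * volterraMonomial θ |κ| 0 n s := by
    intro n
    induction n with
    | zero => intro s hs; simpa [hR_zero, volterraMonomial] using hM s hs
    | succ n ih =>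
      intro s hs
      rw [hR_volterra n s hs.1, ← volterraOp_volterraMonomial hθ le_rfl n hs.1,
        ← volterraOp_const_mul]
      exact abs_volterraOp_le hθ hs.1 (hR_cont n s)
        ((continuous_volterraMonomial hθ le_rfl n).const_mul M).continuousOn
        fun r hr => ih r ⟨hr.1, hr.2.trans hs.2⟩
  have hR_lim : Tendsto (fun n => R n t) atTop (𝓝 0) := by
    refine squeeze_zero_norm (fun n => hR_le n t ⟨ht, le_rfl⟩) ?_
    simpa using
      (hasSum_volterraMonomial (κ := |κ|) hθ le_rfl ht).summable.tendsto_atTop_zero.const_mul M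
  simpa [hR] using (tendsto_const_nhds (x := η t)).sub hR_lim

/-- The `k`-th iterate of `volterraOp θ κ` applied to `(u₀ + u₁ t)²`, written as
`u₀² t⁰/Γ(1) + 2u₀u₁ t¹/Γ(2) + 2u₁² t²/Γ(3)`. -/
noncomputable def neumannTerm (θ κ u₀ u₁ : ℝ) (k : ℕ) (t : ℝ) : ℝ :=
  u₀ ^ 2 * volterraMonomial θ κ 0 k t
    + (2 * u₀ * u₁ * volterraMonomial θ κ 1 k t + 2 * u₁ ^ 2 * volterraMonomial θ κ 2 k t)

section neumannTerm

variable {θ κ u₀ u₁ : ℝ}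

lemma neumannTerm_zero (t : ℝ) : neumannTerm θ κ u₀ u₁ 0 t = (u₀ + u₁ * t) ^ 2 := by
  norm_num [neumannTerm, volterraMonomial, Gamma_ofNat_eq_factorial]
  ring

lemma continuous_neumannTerm (hθ : -1 < θ) (k : ℕ) : Continuous (neumannTerm θ κ u₀ u₁ k) :=
  ((continuous_volterraMonomial hθ le_rfl k).const_mul _).add
    (((continuous_volterraMonomial hθ zero_le_one k).const_mul _).add
      ((continuous_volterraMonomial hθ zero_le_two k).const_mul _))

lemma volterraOp_neumannTerm (hθ : -1 < θ) (k : ℕ) {t : ℝ} (ht : 0 ≤ t) :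
    volterraOp θ κ (neumannTerm θ κ u₀ u₁ k) t = neumannTerm θ κ u₀ u₁ (k + 1) t := by
  have hm : ∀ j, 0 ≤ j → ∀ c, ContinuousOn (fun s => c * volterraMonomial θ κ j k s) (Icc 0 t) :=
    fun j hj c => ((continuous_volterraMonomial hθ hj k).const_mul c).continuousOn
  unfold neumannTerm
  rw [volterraOp_add hθ ht (hm 0 le_rfl _) ?_,
    volterraOp_add hθ ht (hm 1 zero_le_one _) (hm 2 zero_le_two _),
    volterraOp_const_mul, volterraOp_const_mul, volterraOp_const_mul,
    volterraOp_volterraMonomial hθ le_rfl k ht, volterraOp_volterraMonomial hθ zero_le_one k ht,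
    volterraOp_volterraMonomial hθ zero_le_two k ht]
  exact (hm 1 zero_le_one _).add (hm 2 zero_le_two _)

lemma hasSum_neumannTerm (hθ : -1 < θ) {t : ℝ} (ht : 0 ≤ t) :
    HasSum (fun k => neumannTerm θ κ u₀ u₁ k t)
      (u₀ ^ 2 * mittagLeffler (θ + 1) 1 (κ * Gamma (θ + 1) * t ^ (θ + 1))
        + 2 * u₀ * u₁ * t * mittagLeffler (θ + 1) 2 (κ * Gamma (θ + 1) * t ^ (θ + 1))
        + 2 * u₁ ^ 2 * t ^ 2 * mittagLeffler (θ + 1) 3 (κ * Gamma (θ + 1) * t ^ (θ + 1))) := by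
  have hsum := ((hasSum_volterraMonomial (κ := κ) hθ le_rfl ht).mul_left (u₀ ^ 2)).add
    (((hasSum_volterraMonomial (κ := κ) hθ zero_le_one ht).mul_left (2 * u₀ * u₁)).add
      ((hasSum_volterraMonomial (κ := κ) hθ zero_le_two ht).mul_left (2 * u₁ ^ 2)))
  norm_num at hsum
  simpa only [neumannTerm, mul_assoc, add_assoc] using hsum

end neumannTerm

theorem volterra_linear_initial_data_general
    (θ κ u₀ u₁ : ℝ) (hθ : -1 < θ)
    (η : ℝ → ℝ) (hcont : ContinuousOn η (Set.Ici 0))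
    (heq : ∀ t ≥ (0:ℝ),
      η t = (u₀ + u₁ * t) ^ 2 + κ * ∫ s in (0:ℝ)..t, (t - s) ^ θ * η s) :
    ∀ t ≥ (0:ℝ),
      η t = u₀ ^ 2 * mittagLeffler (θ + 1) 1 (κ * Real.Gamma (θ + 1) * t ^ (θ + 1))
        + 2 * u₀ * u₁ * t * mittagLeffler (θ + 1) 2 (κ * Real.Gamma (θ + 1) * t ^ (θ + 1))
        + 2 * u₁ ^ 2 * t ^ 2 * mittagLeffler (θ + 1) 3 (κ * Real.Gamma (θ + 1) * t ^ (θ + 1)) := by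
  intro t ht
  have hη_eq : ∀ s ≥ 0, η s = neumannTerm θ κ u₀ u₁ 0 s + volterraOp θ κ η s := fun s hs => by
    rw [neumannTerm_zero]
    exact heq s hs
  have hT_cont k : ContinuousOn (neumannTerm θ κ u₀ u₁ k) (Ici 0) :=
    (continuous_neumannTerm hθ k).continuousOn
  exact tendsto_nhds_unique
    (tendsto_sum_of_eq_add_volterraOp hθ hcont hT_cont hη_eq
      (fun k _ hs => volterraOp_neumannTerm hθ k hs) ht)
    (hasSum_neumannTerm hθ ht).tendsto_sum_nat

theorem volterra_linear_initial_data
    (θ κ u₀ u₁ : ℝ) (hθ : -1 < θ) (hκ : 0 < κ)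
    (η : ℝ → ℝ) (hcont : ContinuousOn η (Set.Ici 0))
    (heq : ∀ t ≥ (0:ℝ),
      η t = (u₀ + u₁ * t) ^ 2 + κ * ∫ s in (0:ℝ)..t, (t - s) ^ θ * η s) :
    ∀ t ≥ (0:ℝ),
      η t = u₀ ^ 2 * mittagLeffler (θ + 1) 1 (κ * Real.Gamma (θ + 1) * t ^ (θ + 1))
        + 2 * u₀ * u₁ * t * mittagLeffler (θ + 1) 2 (κ * Real.Gamma (θ + 1) * t ^ (θ + 1))
        + 2 * u₁ ^ 2 * t ^ 2 * mittagLeffler (θ + 1) 3 (κ * Real.Gamma (θ + 1) * t ^ (θ + 1)) :=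
  volterra_linear_initial_data_general θ κ u₀ u₁ hθ η hcont heq
end

section
/- Let α ∈ (1,∞) with α ≠ 2 and let b > 0. Then ∫_0^∞ sin²(b ξ^{α/2})/ξ^α dξ = 2^{2(1−1/α)} · α^{−1} · cos(π/α) · Γ(2(1/α − 1)) · b^{2−2/α}. -/
/-!
Substituting `ξ = x ^ (2 / α)` and writing `sin² y = (1 - cos 2y) / 2` reduces the integral, with
`s = 2 - 2 / α ∈ (0, 2)`, to `I(s) = ∫₀^∞ (1 - cos x) / x ^ (s + 1) dx`. Since
`Γ(s + 1) / x ^ (s + 1) = ∫₀^∞ t ^ s e^{-xt} dt` and the Laplace transform of `1 - cos` is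
`1 / (t (1 + t²))`, Tonelli turns `Γ(s + 1) I(s)` into `∫₀^∞ t ^ (s - 1) / (1 + t²) dt`; writing
`(1 + t²)⁻¹ = ∫₀^∞ e^{-(1 + t²) u} du` and swapping once more evaluates this to
`Γ(s / 2) Γ(1 - s / 2) / 2 = π / (2 sin (π s / 2))`. The reflection formula finally rewrites
`π / (2 sin (π s / 2) Γ(s + 1))` as `-cos (π s / 2) Γ(-s)`.
-/

open Real MeasureTheory Set Filter Function

theorem integrable_uncurry_of_nonneg {α β : Type*} [MeasurableSpace α] [MeasurableSpace β]
    {μ : Measure α} {ν : Measure β} [SFinite μ] [SFinite ν] {f : α → β → ℝ}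
    (hf : AEStronglyMeasurable (uncurry f) (μ.prod ν)) (hf₀ : ∀ᵐ y ∂ν, ∀ᵐ x ∂μ, 0 ≤ f x y)
    (hfx : ∀ᵐ y ∂ν, Integrable (f · y) μ) (hfy : Integrable (fun y ↦ ∫ x, f x y ∂μ) ν) :
    Integrable (uncurry f) (μ.prod ν) := by
  refine (integrable_prod_iff' hf).2 ⟨hfx, hfy.congr ?_⟩
  filter_upwards [hf₀] with y hy
  exact integral_congr_ae (by filter_upwards [hy] with x hx using (Real.norm_of_nonneg hx).symm)

theorem integral_comp_mul_div_rpow (g : ℝ → ℝ) (s : ℝ) {c : ℝ} (hc : 0 < c) :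
    ∫ x in Ioi 0, g (c * x) / x ^ (s + 1) = c ^ s * ∫ x in Ioi 0, g x / x ^ (s + 1) := by
  have h := integral_comp_mul_left_Ioi (fun x ↦ g x / x ^ (s + 1)) 0 hc
  rw [mul_zero, smul_eq_mul] at h
  calc ∫ x in Ioi 0, g (c * x) / x ^ (s + 1)
      = c ^ (s + 1) * ∫ x in Ioi 0, g (c * x) / (c * x) ^ (s + 1) := by
        rw [← integral_const_mul]
        refine setIntegral_congr_fun measurableSet_Ioi fun x (hx : 0 < x) ↦ ?_
        rw [mul_rpow hc.le hx.le]
        field_simp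
    _ = c ^ s * ∫ x in Ioi 0, g x / x ^ (s + 1) := by
        rw [h, ← mul_assoc, rpow_add_one hc.ne']
        field_simp

theorem integral_comp_rpow_div_rpow (g : ℝ → ℝ) {a : ℝ} (ha : 0 < a) (q : ℝ) :
    ∫ ξ in Ioi 0, g (ξ ^ a) / ξ ^ q = a⁻¹ * ∫ x in Ioi 0, g x / x ^ ((q - 1) / a + 1) := by
  rw [← integral_comp_rpow_Ioi (fun ξ ↦ g (ξ ^ a) / ξ ^ q) (inv_ne_zero ha.ne'),
    ← integral_const_mul]
  refine setIntegral_congr_fun measurableSet_Ioi fun x (hx : 0 < x) ↦ ?_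
  simp only [smul_eq_mul, abs_of_pos (inv_pos.2 ha)]
  rw [← rpow_mul hx.le, ← rpow_mul hx.le, inv_mul_cancel₀ ha.ne', rpow_one]
  rw [show (q - 1) / a + 1 = a⁻¹ * q - (a⁻¹ - 1) by ring, rpow_sub hx (a⁻¹ * q), div_div_eq_mul_div]
  ring

theorem integral_mul_exp_neg_mul_Ioi (c : ℝ) {a : ℝ} (ha : 0 < a) :
    ∫ u in Ioi 0, c * exp (-a * u) = c / a := by
  rw [integral_const_mul, integral_exp_mul_Ioi (neg_lt_zero.2 ha), mul_zero, exp_zero,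
    neg_div_neg_eq, mul_one_div]

theorem integral_rpow_mul_exp_neg_mul {s x : ℝ} (hs : -1 < s) (hx : 0 < x) :
    ∫ t in Ioi 0, t ^ s * exp (-x * t) = Gamma (s + 1) / x ^ (s + 1) := by
  have h := integral_rpow_mul_exp_neg_mul_rpow one_pos hs hx
  simp only [rpow_one, div_one] at h
  rw [h, rpow_neg hx.le]
  ring

theorem integrableOn_one_sub_cos_mul_exp_neg_mul {t : ℝ} (ht : 0 < t) :
    IntegrableOn (fun x ↦ (1 - cos x) * exp (-t * x)) (Ioi 0) := by
  refine ((integrableOn_exp_mul_Ioi (neg_lt_zero.2 ht) 0).const_mul 2).mono' (by fun_prop) ?_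
  filter_upwards with x
  rw [norm_mul, Real.norm_of_nonneg (exp_pos _).le, Real.norm_eq_abs]
  gcongr
  rw [abs_le]
  constructor <;> linarith [neg_one_le_cos x, cos_le_one x]

theorem integral_one_sub_cos_mul_exp_neg_mul {t : ℝ} (ht : 0 < t) :
    ∫ x in Ioi 0, (1 - cos x) * exp (-t * x) = (t * (1 + t ^ 2))⁻¹ := by
  have h₁ : (-t : ℂ).re < 0 := by simpa using ht
  have h₂ : (-t + Complex.I : ℂ).re < 0 := by simpa using ht
  have hi₁ := integrableOn_exp_mul_complex_Ioi h₁ 0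
  have hi₂ := integrableOn_exp_mul_complex_Ioi h₂ 0
  have hre (x : ℝ) : (1 - cos x) * exp (-t * x)
      = RCLike.re (Complex.exp ((-t : ℂ) * x) - Complex.exp ((-t + Complex.I) * x)) := by
    simp [Complex.exp_re, sub_mul, mul_comm]
  simp_rw [hre]
  rw [integral_re (f := fun x : ℝ ↦
      Complex.exp ((-t : ℂ) * x) - Complex.exp ((-t + Complex.I) * x)) (hi₁.sub hi₂),
    integral_sub hi₁ hi₂,
    integral_exp_mul_complex_Ioi h₁, integral_exp_mul_complex_Ioi h₂]
  simp only [Complex.ofReal_zero, mul_zero, Complex.exp_zero, neg_div_neg_eq, one_div,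
    RCLike.re_to_complex, Complex.sub_re, Complex.inv_re, Complex.ofReal_re, Complex.normSq,
    MonoidWithZeroHom.coe_mk, ZeroHom.coe_mk, Complex.ofReal_im, add_zero, div_self_mul_self',
    Complex.div_re, Complex.neg_re, Complex.one_re, Complex.add_re, Complex.I_re, mul_neg, neg_mul,
    one_mul, neg_neg, Complex.add_im, Complex.neg_im, neg_zero, Complex.I_im, zero_add, mul_one,
    Complex.one_im, zero_div, mul_inv_rev]
  field_simp
  ring

section

variable {s : ℝ}

theorem integral_rpow_mul_exp_neg_one_add_sq_mul {u : ℝ} (hs0 : 0 < s) (hu : 0 < u) :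
    ∫ t in Ioi 0, t ^ (s - 1) * exp (-(1 + t ^ 2) * u)
      = exp (-u) * (u ^ (-s / 2) * Gamma (s / 2) / 2) := by
  have h := integral_rpow_mul_exp_neg_mul_rpow two_pos (by linarith : -1 < s - 1) hu
  rw [show s - 1 + 1 = s by ring] at h
  calc ∫ t in Ioi 0, t ^ (s - 1) * exp (-(1 + t ^ 2) * u)
      = ∫ t in Ioi 0, exp (-u) * (t ^ (s - 1) * exp (-u * t ^ (2 : ℝ))) := by
        refine setIntegral_congr_fun measurableSet_Ioi fun t _ ↦ ?_
        rw [rpow_two, mul_left_comm, ← exp_add]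
        ring_nf
    _ = _ := by rw [integral_const_mul, h]; ring

theorem integrable_rpow_mul_exp_neg_one_add_sq_mul (hs0 : 0 < s) (hs2 : s < 2) :
    Integrable (uncurry fun t u : ℝ ↦ t ^ (s - 1) * exp (-(1 + t ^ 2) * u))
      ((volume.restrict (Ioi 0)).prod (volume.restrict (Ioi 0))) := by
  refine integrable_uncurry_of_nonneg (by fun_prop) ?_ ?_ ?_
  · filter_upwards with u
    filter_upwards [ae_restrict_mem measurableSet_Ioi] with t (ht : 0 < t)
    positivity
  · filter_upwards [ae_restrict_mem measurableSet_Ioi] with u (hu : 0 < u)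
    refine IntegrableOn.congr_fun ((integrableOn_rpow_mul_exp_neg_mul_sq hu
      (by linarith : -1 < s - 1)).const_mul (exp (-u))) (fun t _ ↦ ?_) measurableSet_Ioi
    rw [mul_left_comm, ← exp_add]
    ring_nf
  · refine IntegrableOn.congr_fun
      ((GammaIntegral_convergent (by linarith : 0 < 1 - s / 2)).mul_const (Gamma (s / 2) / 2))
      (fun u (hu : 0 < u) ↦ ?_) measurableSet_Ioi
    rw [integral_rpow_mul_exp_neg_one_add_sq_mul hs0 hu, show 1 - s / 2 - 1 = -s / 2 by ring]
    ring

theorem integrableOn_rpow_div_one_add_sq (hs0 : 0 < s) (hs2 : s < 2) :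
    IntegrableOn (fun t : ℝ ↦ t ^ (s - 1) / (1 + t ^ 2)) (Ioi 0) :=
  IntegrableOn.congr_fun (integrable_rpow_mul_exp_neg_one_add_sq_mul hs0 hs2).integral_prod_left
    (fun t _ ↦ integral_mul_exp_neg_mul_Ioi (t ^ (s - 1)) (a := 1 + t ^ 2) (by positivity))
    measurableSet_Ioi

theorem integral_rpow_div_one_add_sq (hs0 : 0 < s) (hs2 : s < 2) :
    ∫ t in Ioi 0, t ^ (s - 1) / (1 + t ^ 2) = π / (2 * sin (π * s / 2)) := by
  have hΓ := Gamma_eq_integral (by linarith : 0 < 1 - s / 2)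
  rw [show 1 - s / 2 - 1 = -s / 2 by ring] at hΓ
  calc ∫ t in Ioi 0, t ^ (s - 1) / (1 + t ^ 2)
      = ∫ t in Ioi 0, ∫ u in Ioi 0, t ^ (s - 1) * exp (-(1 + t ^ 2) * u) :=
        setIntegral_congr_fun measurableSet_Ioi fun t _ ↦
          (integral_mul_exp_neg_mul_Ioi _ (by positivity)).symm
    _ = ∫ u in Ioi 0, ∫ t in Ioi 0, t ^ (s - 1) * exp (-(1 + t ^ 2) * u) :=
        integral_integral_swap (integrable_rpow_mul_exp_neg_one_add_sq_mul hs0 hs2)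
    _ = ∫ u in Ioi 0, exp (-u) * u ^ (-s / 2) * (Gamma (s / 2) / 2) := by
        refine setIntegral_congr_fun measurableSet_Ioi fun u hu ↦ ?_
        rw [integral_rpow_mul_exp_neg_one_add_sq_mul hs0 hu]
        ring
    _ = Gamma (s / 2) * Gamma (1 - s / 2) / 2 := by rw [integral_mul_const, ← hΓ]; ring
    _ = π / (2 * sin (π * s / 2)) := by rw [Gamma_mul_Gamma_one_sub, mul_div_assoc]; field_simp

theorem integral_one_sub_cos_mul_rpow_mul_exp_neg_mul {t : ℝ} (ht : 0 < t) :
    ∫ x in Ioi 0, (1 - cos x) * (t ^ s * exp (-x * t)) = t ^ (s - 1) / (1 + t ^ 2) := by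
  calc ∫ x in Ioi 0, (1 - cos x) * (t ^ s * exp (-x * t))
      = ∫ x in Ioi 0, t ^ s * ((1 - cos x) * exp (-t * x)) := by
        refine setIntegral_congr_fun measurableSet_Ioi fun x _ ↦ ?_
        ring_nf
    _ = t ^ (s - 1) / (1 + t ^ 2) := by
        rw [integral_const_mul, integral_one_sub_cos_mul_exp_neg_mul ht, rpow_sub_one ht.ne']
        field_simp

theorem integrable_one_sub_cos_mul_rpow_mul_exp_neg_mul (hs0 : 0 < s) (hs2 : s < 2) :
    Integrable (uncurry fun x t : ℝ ↦ (1 - cos x) * (t ^ s * exp (-x * t)))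
      ((volume.restrict (Ioi 0)).prod (volume.restrict (Ioi 0))) := by
  refine integrable_uncurry_of_nonneg (by fun_prop) ?_ ?_ ?_
  · filter_upwards [ae_restrict_mem measurableSet_Ioi] with t (ht : 0 < t)
    filter_upwards with x
    exact mul_nonneg (sub_nonneg.2 (cos_le_one x)) (by positivity)
  · filter_upwards [ae_restrict_mem measurableSet_Ioi] with t (ht : 0 < t)
    refine IntegrableOn.congr_fun ((integrableOn_one_sub_cos_mul_exp_neg_mul ht).const_mul (t ^ s))
      (fun x _ ↦ ?_) measurableSet_Ioi
    ring_nf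
  · exact IntegrableOn.congr_fun (integrableOn_rpow_div_one_add_sq hs0 hs2)
      (fun t ht ↦ (integral_one_sub_cos_mul_rpow_mul_exp_neg_mul ht).symm) measurableSet_Ioi

theorem integral_one_sub_cos_div_rpow (hs0 : 0 < s) (hs2 : s < 2) :
    ∫ x in Ioi 0, (1 - cos x) / x ^ (s + 1) = π / (2 * sin (π * s / 2) * Gamma (s + 1)) := by
  have hΓ : 0 < Gamma (s + 1) := Gamma_pos_of_pos (by linarith)
  suffices h : (∫ x in Ioi 0, (1 - cos x) / x ^ (s + 1)) * Gamma (s + 1)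
      = π / (2 * sin (π * s / 2)) by
    rw [← div_div, ← h, mul_div_cancel_right₀ _ hΓ.ne']
  calc (∫ x in Ioi 0, (1 - cos x) / x ^ (s + 1)) * Gamma (s + 1)
      = ∫ x in Ioi 0, ∫ t in Ioi 0, (1 - cos x) * (t ^ s * exp (-x * t)) := by
        rw [← integral_mul_const]
        refine setIntegral_congr_fun measurableSet_Ioi fun x (hx : 0 < x) ↦ ?_
        rw [integral_const_mul, integral_rpow_mul_exp_neg_mul (by linarith) hx]
        ring
    _ = ∫ t in Ioi 0, ∫ x in Ioi 0, (1 - cos x) * (t ^ s * exp (-x * t)) :=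
        integral_integral_swap (integrable_one_sub_cos_mul_rpow_mul_exp_neg_mul hs0 hs2)
    _ = ∫ t in Ioi 0, t ^ (s - 1) / (1 + t ^ 2) :=
        setIntegral_congr_fun measurableSet_Ioi fun t ht ↦
          integral_one_sub_cos_mul_rpow_mul_exp_neg_mul ht
    _ = π / (2 * sin (π * s / 2)) := integral_rpow_div_one_add_sq hs0 hs2

theorem Gamma_neg_mul_cos (hs : -1 < s) (hcos : cos (π * s / 2) ≠ 0) :
    Gamma (-s) * cos (π * s / 2) = -(π / (2 * sin (π * s / 2) * Gamma (s + 1))) := by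
  have hΓ : 0 < Gamma (s + 1) := Gamma_pos_of_pos (by linarith)
  have h := Gamma_mul_Gamma_one_sub (-s)
  rw [sub_neg_eq_add, add_comm 1 s, show π * -s = -(2 * (π * s / 2)) by ring, sin_neg,
    sin_two_mul] at h
  rw [eq_div_of_mul_eq hΓ.ne' h]
  calc π / -(2 * sin (π * s / 2) * cos (π * s / 2)) / Gamma (s + 1) * cos (π * s / 2)
      = -(π / (2 * sin (π * s / 2) * Gamma (s + 1) * cos (π * s / 2)) * cos (π * s / 2)) := by
        ring
    _ = _ := by rw [← div_div, div_mul_cancel₀ _ hcos]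

theorem cos_pi_mul_div_two_ne_zero (hs0 : 0 < s) (hs2 : s < 2) (hs1 : s ≠ 1) :
    cos (π * s / 2) ≠ 0 := by
  rcases hs1.lt_or_gt with hs | hs
  · refine (cos_pos_of_mem_Ioo ⟨?_, ?_⟩).ne' <;> nlinarith [pi_pos]
  · refine (cos_neg_of_pi_div_two_lt_of_lt ?_ ?_).ne <;> nlinarith [pi_pos]

theorem integral_sin_mul_sq_div_rpow {b : ℝ} (hs0 : 0 < s) (hs2 : s < 2) (hs1 : s ≠ 1)
    (hb : 0 < b) :
    ∫ x in Ioi 0, sin (b * x) ^ 2 / x ^ (s + 1)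
      = -((2 * b) ^ s * cos (π * s / 2) * Gamma (-s)) / 2 := by
  calc ∫ x in Ioi 0, sin (b * x) ^ 2 / x ^ (s + 1)
      = (∫ x in Ioi 0, (1 - cos (2 * b * x)) / x ^ (s + 1)) / 2 := by
        rw [← integral_div]
        refine setIntegral_congr_fun measurableSet_Ioi fun x _ ↦ ?_
        rw [sin_sq_eq_half_sub, ← mul_assoc]
        ring
    _ = (2 * b) ^ s * -(Gamma (-s) * cos (π * s / 2)) / 2 := by
        rw [integral_comp_mul_div_rpow (fun x ↦ 1 - cos x) s (by positivity),
          integral_one_sub_cos_div_rpow hs0 hs2,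
          Gamma_neg_mul_cos (by linarith) (cos_pi_mul_div_two_ne_zero hs0 hs2 hs1), neg_neg]
    _ = _ := by ring

end

theorem integral_sin_sq_rpow
    (α b : ℝ) (hα : 1 < α) (hα2 : α ≠ 2) (hb : 0 < b) :
    ∫ ξ in Set.Ioi (0:ℝ), Real.sin (b * ξ ^ (α / 2)) ^ 2 / ξ ^ α =
      (2:ℝ) ^ (2 * (1 - 1 / α)) * α⁻¹ * Real.cos (π / α) *
        Real.Gamma (2 * (1 / α - 1)) * b ^ (2 - 2 / α) := by
  have hα0 : 0 < α := by linarith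
  set s := 2 - 2 / α with hs
  have hs0 : 0 < s := by
    have : 2 / α < 2 := (div_lt_iff₀ hα0).2 (by linarith)
    linarith
  have hs2 : s < 2 := by
    have : 0 < 2 / α := by positivity
    linarith
  have hs1 : s ≠ 1 := fun h ↦ hα2 (by rw [hs] at h; field_simp at h; linarith)
  rw [integral_comp_rpow_div_rpow (fun x ↦ sin (b * x) ^ 2) (by positivity : 0 < α / 2) α,
    show (α - 1) / (α / 2) = s by rw [hs]; field_simp,
    integral_sin_mul_sq_div_rpow hs0 hs2 hs1 hb,
    show π * s / 2 = π - π / α by rw [hs]; ring, cos_pi_sub,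
    show 2 * (1 / α - 1) = -s by rw [hs]; ring, show 2 * (1 - 1 / α) = s by rw [hs]; ring,
    mul_rpow two_pos.le hb.le]
  field_simp
end

section
/- As n → ∞ along the positive integers, ∫_n^∞ t^n e^{−t} dt is asymptotically equivalent to (n^n/e^n)·√(πn/2); that is, the ratio of these two quantities tends to 1. -/
/-!
Laplace's method. Substituting `t = n + √n u` gives
`∫ₙ^∞ tⁿ e⁻ᵗ dt = nⁿ e⁻ⁿ √n ∫₀^∞ exp (n log (1 + u/√n) - √n u) du`.
The exponent tends to `-u²/2` pointwise, and `log (1 + x) ≤ x - x²/(2(1 + x))` bounds it by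
`(1 - u)/4` uniformly in `n`, so by dominated convergence the integral tends to
`∫₀^∞ e^{-u²/2} du = √(π/2)`.
-/

open Real Filter MeasureTheory Set Topology

theorem Real.log_one_add_le_sub_sq_div {x : ℝ} (hx : 0 ≤ x) :
    log (1 + x) ≤ x - x ^ 2 / (2 * (1 + x)) := by
  have hpos : 0 < 1 + x := by linarith
  have h := self_le_sinh_iff.mpr (log_nonneg (by linarith : (1 : ℝ) ≤ 1 + x))
  rw [sinh_log hpos] at h
  calc log (1 + x) ≤ (1 + x - (1 + x)⁻¹) / 2 := h
    _ = x - x ^ 2 / (2 * (1 + x)) := by field_simp; ring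

theorem integral_comp_add_right_Ioi {E : Type*} [NormedAddCommGroup E] [NormedSpace ℝ E]
    (g : ℝ → E) (a c : ℝ) : ∫ x in Ioi a, g (x + c) = ∫ x in Ioi (a + c), g x := by
  have := (measurePreserving_add_right volume c).setIntegral_preimage_emb
    (measurableEmbedding_addRight c) g (Ioi (a + c))
  simpa [preimage_add_const_Ioi] using this

theorem integral_comp_mul_add_Ioi {E : Type*} [NormedAddCommGroup E] [NormedSpace ℝ E]
    (g : ℝ → E) (c : ℝ) {b : ℝ} (hb : 0 < b) :
    ∫ x in Ioi 0, g (b * x + c) = b⁻¹ • ∫ x in Ioi c, g x := by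
  rw [integral_comp_mul_left_Ioi (fun y => g (y + c)) 0 hb, integral_comp_add_right_Ioi,
    mul_zero, zero_add]

theorem integral_gaussian_half_Ioi : ∫ u in Ioi (0 : ℝ), exp (-(u ^ 2 / 2)) = √(π / 2) := by
  have h := integral_gaussian_Ioi (1 / 2)
  simp only [neg_mul, one_div_mul_eq_div] at h
  rw [h, show π / (1 / 2) = 2 ^ 2 * (π / 2) by ring, sqrt_mul (by positivity),
    sqrt_sq zero_le_two]
  ring

noncomputable def gammaTailExponent (s u : ℝ) : ℝ := s ^ 2 * log (1 + u / s) - s * u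

theorem gammaTailExponent_le {s u : ℝ} (hs : 1 ≤ s) (hu : 0 ≤ u) :
    gammaTailExponent s u ≤ (1 - u) / 4 := by
  have hs0 : 0 < s := by linarith
  have hx : 0 ≤ u / s := div_nonneg hu hs0.le
  have hlog := mul_le_mul_of_nonneg_left (log_one_add_le_sub_sq_div hx) (sq_nonneg s)
  have hdiv : u / s ≤ u := div_le_self hu hs
  calc gammaTailExponent s u ≤ s ^ 2 * (u / s - (u / s) ^ 2 / (2 * (1 + u / s))) - s * u :=
        sub_le_sub_right hlog _
    _ = -(u ^ 2 / (2 * (1 + u / s))) := by field_simp; ring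
    _ ≤ -(u ^ 2 / (2 * (1 + u))) := by gcongr
    _ ≤ (1 - u) / 4 := by
        rw [neg_le, ← neg_div, le_div_iff₀ (by positivity)]
        nlinarith

theorem abs_gammaTailExponent_add_le {s u : ℝ} (hu : 0 ≤ u) (hus : u < s) :
    |gammaTailExponent s u + u ^ 2 / 2| ≤ u ^ 3 / (s - u) := by
  have hs0 : 0 < s := hu.trans_lt hus
  obtain ⟨x, rfl⟩ : ∃ x, u = s * x := ⟨u / s, by field_simp⟩
  have hx0 : 0 ≤ x := nonneg_of_mul_nonneg_right hu hs0
  have hx1 : x < 1 := by nlinarith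
  have hsx : s * x / s = x := mul_div_cancel_left₀ x hs0.ne'
  have h := abs_log_sub_add_sum_range_le (x := -x) (by rwa [abs_neg, abs_of_nonneg hx0]) 2
  norm_num [Finset.sum_range_succ, abs_of_nonneg hx0] at h
  calc |gammaTailExponent s (s * x) + (s * x) ^ 2 / 2|
        = |s ^ 2 * (-x + x ^ 2 / 2 + log (1 + x))| := by
          rw [gammaTailExponent, hsx]
          ring_nf
    _ = s ^ 2 * |-x + x ^ 2 / 2 + log (1 + x)| := by rw [abs_mul, abs_of_nonneg (sq_nonneg s)]
    _ ≤ s ^ 2 * (x ^ 3 / (1 - x)) := by gcongr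
    _ = (s * x) ^ 3 / (s - s * x) := by
          rw [← mul_one_sub, mul_pow]
          field_simp

theorem tendsto_gammaTailExponent {u : ℝ} (hu : 0 ≤ u) :
    Tendsto (fun s => gammaTailExponent s u) atTop (𝓝 (-(u ^ 2 / 2))) := by
  have hbound : Tendsto (fun s => u ^ 3 / (s - u)) atTop (𝓝 0) :=
    tendsto_const_nhds.div_atTop (tendsto_atTop_add_const_right _ (-u) tendsto_id)
  rw [tendsto_iff_norm_sub_tendsto_zero]
  refine squeeze_zero' (Eventually.of_forall fun _ => norm_nonneg _) ?_ hbound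
  filter_upwards [eventually_gt_atTop u] with s hs
  simpa [sub_neg_eq_add] using abs_gammaTailExponent_add_le hu hs

theorem add_pow_mul_exp_neg_eq {n : ℕ} {s u : ℝ} (hs : 0 < s) (hsn : s ^ 2 = n) (hu : 0 ≤ u) :
    (s * u + n) ^ n * exp (-(s * u + n)) = n ^ n / exp n * exp (gammaTailExponent s u) := by
  have hpos : 0 < 1 + u / s := by positivity
  have hfactor : s * u + n = n * (1 + u / s) := by rw [← hsn]; field_simp; ring
  rw [gammaTailExponent, hsn, exp_sub, exp_nat_mul, exp_log hpos, neg_add, exp_add, exp_neg,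
    exp_neg, hfactor, mul_pow]
  ring

theorem integral_Ioi_pow_mul_exp_neg_eq {n : ℕ} (hn : 0 < n) :
    ∫ t in Ioi (n : ℝ), t ^ n * exp (-t)
      = n ^ n / exp n * √n * ∫ u in Ioi 0, exp (gammaTailExponent √n u) := by
  have hs : 0 < √(n : ℝ) := sqrt_pos.mpr (Nat.cast_pos.mpr hn)
  have hsubst := integral_comp_mul_add_Ioi (fun t => t ^ n * exp (-t)) (n : ℝ) hs
  rw [setIntegral_congr_fun measurableSet_Ioi fun u (hu : 0 < u) =>
    add_pow_mul_exp_neg_eq hs (sq_sqrt n.cast_nonneg) hu.le, integral_const_mul,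
    smul_eq_mul] at hsubst
  rw [eq_inv_mul_iff_mul_eq₀ hs.ne'] at hsubst
  rw [← hsubst]
  ring

theorem tendsto_integral_exp_gammaTailExponent :
    Tendsto (fun s => ∫ u in Ioi 0, exp (gammaTailExponent s u)) atTop (𝓝 √(π / 2)) := by
  rw [← integral_gaussian_half_Ioi]
  refine tendsto_integral_filter_of_dominated_convergence (fun u => exp ((1 - u) / 4))
    (Eventually.of_forall fun s => ?_) ?_ ?_ ?_
  · exact (by unfold gammaTailExponent; fun_prop : Measurable _).aestronglyMeasurable
  · filter_upwards [eventually_ge_atTop 1] with s hs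
    filter_upwards [ae_restrict_mem measurableSet_Ioi] with u (hu : 0 < u)
    rw [norm_of_nonneg (exp_nonneg _), exp_le_exp]
    exact gammaTailExponent_le hs hu.le
  · have hdecay := (exp_neg_integrableOn_Ioi 0 (by norm_num : (0 : ℝ) < 1 / 4)).const_mul
      (exp (1 / 4))
    refine IntegrableOn.congr_fun hdecay (fun u _ => ?_) measurableSet_Ioi
    rw [← exp_add]
    ring_nf
  · filter_upwards [ae_restrict_mem measurableSet_Ioi] with u (hu : 0 < u)
    exact (continuous_exp.tendsto _).comp (tendsto_gammaTailExponent hu.le)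

theorem gamma_tail_integral_asymptotics :
    Tendsto (fun n : ℕ =>
        (∫ t in Set.Ioi (n : ℝ), t ^ n * Real.exp (-t)) /
          ((n : ℝ) ^ n / Real.exp n * Real.sqrt (π * n / 2)))
      atTop (nhds 1) := by
  have hpi : √(π / 2) ≠ 0 := (sqrt_pos.mpr (by positivity)).ne'
  have hlim := (tendsto_integral_exp_gammaTailExponent.comp
    (tendsto_sqrt_atTop.comp tendsto_natCast_atTop_atTop)).div_const √(π / 2)
  rw [div_self hpi] at hlim
  refine hlim.congr' ?_
  filter_upwards [eventually_gt_atTop 0] with n hn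
  have hs : √(n : ℝ) ≠ 0 := (sqrt_pos.mpr (Nat.cast_pos.mpr hn)).ne'
  rw [Function.comp_apply, Function.comp_apply, integral_Ioi_pow_mul_exp_neg_eq hn,
    mul_div_assoc, mul_comm π, mul_div_assoc, sqrt_mul n.cast_nonneg]
  field_simp
end

section
/- As n → ∞ along the positive integers, e^{−n} · ∑_{m=0}^{n−1} n^m/m! converges to 1/2. -/
/-!
With `n = k + 1`, the sum `e^{-n} ∑_{m ≤ k} n^m / m!` is the upper tail `∫_n^∞ t^k e^{-t} / k! dt`
of the Gamma density (differentiate `t ↦ e^{-t} ∑_{m ≤ k} t^m / m!`). The substitution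
`t = n + √n s` turns it into `√n n^k e^{-n} / k!` times `∫_0^∞ (1 + s/√n)^k e^{-√n s} ds`.
By Stirling the prefactor tends to `1 / √(2π)`, and by dominated convergence the integral tends to
`∫_0^∞ e^{-s²/2} ds = √(2π) / 2`.
-/

open Real Filter Topology MeasureTheory Set Finset

theorem hasDerivAt_sum_range_pow_div_factorial (k : ℕ) (t : ℝ) :
    HasDerivAt (fun t : ℝ => ∑ m ∈ range (k + 1), t ^ m / m.factorial)
      (∑ m ∈ range k, t ^ m / m.factorial) t := by
  induction k with
  | zero => simpa using hasDerivAt_const t (1 : ℝ)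
  | succ k ih =>
    simp_rw [sum_range_succ _ (k + 1)]
    refine (ih.add ((hasDerivAt_pow (k + 1) t).div_const ((k + 1).factorial : ℝ))).congr_deriv ?_
    rw [Nat.factorial_succ, sum_range_succ]
    push_cast
    field_simp

theorem hasDerivAt_exp_neg_mul_sum_range (k : ℕ) (t : ℝ) :
    HasDerivAt (fun t : ℝ => -(exp (-t) * ∑ m ∈ range (k + 1), t ^ m / m.factorial))
      (t ^ k / k.factorial * exp (-t)) t := by
  refine (((hasDerivAt_neg t).exp).mul
    (hasDerivAt_sum_range_pow_div_factorial k t)).neg.congr_deriv ?_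
  rw [sum_range_succ]
  ring

theorem tendsto_exp_neg_mul_sum_range (k : ℕ) :
    Tendsto (fun t : ℝ => exp (-t) * ∑ m ∈ range (k + 1), t ^ m / m.factorial) atTop (𝓝 0) := by
  simp_rw [mul_sum]
  rw [← sum_const_zero (s := range (k + 1))]
  refine tendsto_finsetSum _ fun m _ => ?_
  simpa [div_eq_mul_inv, mul_comm, mul_left_comm, mul_assoc] using
    (tendsto_pow_mul_exp_neg_atTop_nhds_zero m).mul_const ((m.factorial : ℝ)⁻¹)

theorem integral_Ioi_pow_div_factorial_mul_exp_neg (k : ℕ) {x : ℝ} (hx : 0 ≤ x) :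
    ∫ t in Ioi x, t ^ k / k.factorial * exp (-t) =
      exp (-x) * ∑ m ∈ range (k + 1), x ^ m / m.factorial := by
  rw [integral_Ioi_of_hasDerivAt_of_nonneg' (fun t _ => hasDerivAt_exp_neg_mul_sum_range k t)
    (fun t ht => by have : 0 ≤ t := hx.trans ht.out.le; positivity)
    (tendsto_exp_neg_mul_sum_range k).neg]
  ring

theorem integral_Ioi_eq_mul_integral_Ioi_comp_add_mul (f : ℝ → ℝ) (a : ℝ) {c : ℝ} (hc : 0 < c) :
    ∫ t in Ioi a, f t = c * ∫ s in Ioi 0, f (a + c * s) := by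
  have himg : (fun s => a + c * s) '' Ioi 0 = Ioi a := by
    have := image_const_add_Ioi a (c * 0)
    rw [← image_mul_left_Ioi hc, image_image, mul_zero, add_zero] at this
    exact this
  have hderiv (s : ℝ) : HasDerivWithinAt (fun s => a + c * s) c (Ioi 0) s := by
    simpa using ((hasDerivAt_id s).const_mul c).const_add a |>.hasDerivWithinAt
  rw [← himg, integral_image_eq_integral_abs_deriv_smul measurableSet_Ioi (fun s _ => hderiv s)
    (fun x _ y _ hxy => mul_left_cancel₀ hc.ne' (add_left_cancel hxy)), abs_of_pos hc,
    integral_smul, smul_eq_mul]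

theorem exp_neg_mul_sum_range_eq_mul_integral (k : ℕ) {x : ℝ} (hx : 0 < x) :
    exp (-x) * ∑ m ∈ range (k + 1), x ^ m / m.factorial =
      √x * x ^ k * exp (-x) / k.factorial *
        ∫ s in Ioi 0, (1 + s / √x) ^ k * exp (-(√x * s)) := by
  have hsx : 0 < √x := sqrt_pos.mpr hx
  rw [← integral_Ioi_pow_div_factorial_mul_exp_neg k hx.le,
    integral_Ioi_eq_mul_integral_Ioi_comp_add_mul _ x hsx, ← integral_const_mul,
    ← integral_const_mul]
  refine setIntegral_congr_fun measurableSet_Ioi fun s _ => ?_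
  have hx_add : x + √x * s = x * (1 + s / √x) := by
    field_simp
    linear_combination s * mul_self_sqrt hx.le
  rw [hx_add, mul_pow, show -(x * (1 + s / √x)) = -x + -(√x * s) by rw [← hx_add]; ring, exp_add]
  ring

theorem tendsto_sqrt_mul_pow_mul_exp_neg_div_factorial :
    Tendsto (fun k : ℕ => √(k + 1) * (k + 1 : ℝ) ^ k * exp (-(k + 1)) / k.factorial)
      atTop (𝓝 (√(2 * π))⁻¹) := by
  have hlim := ((Stirling.tendsto_stirlingSeq_sqrt_pi.comp (tendsto_add_atTop_nat 1)).const_mul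
    √2).inv₀ (by positivity)
  rw [← sqrt_mul zero_le_two] at hlim
  refine hlim.congr fun k => ?_
  simp only [Function.comp_apply, Stirling.stirlingSeq, Nat.factorial_succ, div_pow, exp_one_pow]
  push_cast
  rw [sqrt_mul zero_le_two, exp_neg]
  field_simp
  ring

/-- `log x ≤ sinh (log x) = (x - x⁻¹) / 2` for `x ≥ 1`. -/
theorem log_one_add_le_self_sub_sq_div {u : ℝ} (hu : 0 ≤ u) :
    log (1 + u) ≤ u - u ^ 2 / (2 * (1 + u)) := by
  have h := self_le_sinh_iff.mpr (log_nonneg (by linarith : (1 : ℝ) ≤ 1 + u))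
  rw [sinh_log (by positivity)] at h
  convert h using 1
  field_simp
  ring

theorem sq_mul_log_one_add_div_sub_div_le {r s : ℝ} (hr : 0 < r) (hs : 0 ≤ s) :
    r ^ 2 * (log (1 + s / r) - s / r) ≤ -(s ^ 2 / (2 + 2 * (s / r))) :=
  calc r ^ 2 * (log (1 + s / r) - s / r)
      ≤ r ^ 2 * (s / r - (s / r) ^ 2 / (2 * (1 + s / r)) - s / r) := by
        gcongr; exact log_one_add_le_self_sub_sq_div (div_nonneg hs hr.le)
    _ = -(s ^ 2 / (2 + 2 * (s / r))) := by field_simp; ring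

theorem le_sq_mul_log_one_add_div_sub_div {r s : ℝ} (hr : 0 < r) (hs : 0 ≤ s) :
    -(s ^ 2 / (2 + s / r)) ≤ r ^ 2 * (log (1 + s / r) - s / r) :=
  calc -(s ^ 2 / (2 + s / r)) = r ^ 2 * (2 * (s / r) / (s / r + 2) - s / r) := by
        field_simp; ring
    _ ≤ r ^ 2 * (log (1 + s / r) - s / r) := by
        gcongr; exact le_log_one_add_of_nonneg (div_nonneg hs hr.le)

theorem tendsto_sq_mul_log_one_add_div_sub_div {s : ℝ} (hs : 0 ≤ s) :
    Tendsto (fun r => r ^ 2 * (log (1 + s / r) - s / r)) atTop (𝓝 (-(s ^ 2 / 2))) := by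
  have hlim (c : ℝ) : Tendsto (fun r => -(s ^ 2 / (2 + c * (s / r)))) atTop (𝓝 (-(s ^ 2 / 2))) := by
    simpa using (tendsto_const_nhds.div
      ((tendsto_const_nhds.div_atTop tendsto_id).const_mul c |>.const_add 2) (by simp)).neg
  refine tendsto_of_tendsto_of_tendsto_of_le_of_le' (by simpa only [one_mul] using hlim 1)
    (hlim 2) ?_ ?_ <;> filter_upwards [eventually_gt_atTop 0] with r hr
  · exact le_sq_mul_log_one_add_div_sub_div hr hs
  · exact sq_mul_log_one_add_div_sub_div_le hr hs

theorem one_add_div_pow_mul_exp_neg_eq {k : ℕ} {r s : ℝ} (hr : 0 < r) (hk : r ^ 2 = k + 1)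
    (hs : 0 ≤ s) : (1 + s / r) ^ k * exp (-(r * s)) =
      exp (r ^ 2 * (log (1 + s / r) - s / r) - log (1 + s / r)) := by
  rw [← exp_log (by positivity : 0 < 1 + s / r), ← exp_nat_mul, ← exp_add, log_exp]
  congr 1
  rw [show (k : ℝ) = r ^ 2 - 1 by linarith]
  field_simp
  ring

theorem one_add_div_pow_mul_exp_neg_le {k : ℕ} {r s : ℝ} (hr : 1 ≤ r) (hk : r ^ 2 = k + 1)
    (hs : 0 ≤ s) : (1 + s / r) ^ k * exp (-(r * s)) ≤ exp (1 / 2 - s / 2) := by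
  have hr0 : 0 < r := by linarith
  rw [one_add_div_pow_mul_exp_neg_eq hr0 hk hs, exp_le_exp]
  have hlog : 0 ≤ log (1 + s / r) := log_nonneg (by have := div_nonneg hs hr0.le; linarith)
  have : s / 2 - 1 / 2 ≤ s ^ 2 / (2 + 2 * (s / r)) :=
    calc s / 2 - 1 / 2 ≤ s ^ 2 / (2 + 2 * s) := by rw [le_div_iff₀ (by positivity)]; nlinarith
      _ ≤ s ^ 2 / (2 + 2 * (s / r)) := by gcongr; exact div_le_self hs hr
  linarith [sq_mul_log_one_add_div_sub_div_le hr0 hs]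

theorem tendsto_one_add_div_sqrt_pow_mul_exp_neg {s : ℝ} (hs : 0 ≤ s) :
    Tendsto (fun k : ℕ => (1 + s / √(k + 1)) ^ k * exp (-(√(k + 1) * s))) atTop
      (𝓝 (exp (-(s ^ 2 / 2)))) := by
  have hr : Tendsto (fun k : ℕ => √(k + 1)) atTop atTop :=
    tendsto_sqrt_atTop.comp (tendsto_natCast_atTop_atTop.atTop_add tendsto_const_nhds)
  have hlog : Tendsto (fun k : ℕ => log (1 + s / √(k + 1))) atTop (𝓝 0) := by
    simpa using ((tendsto_const_nhds.div_atTop hr).const_add 1).log (by simp)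
  have hlim := ((tendsto_sq_mul_log_one_add_div_sub_div hs).comp hr).sub hlog |>.rexp
  rw [sub_zero] at hlim
  refine hlim.congr fun k => ?_
  exact (one_add_div_pow_mul_exp_neg_eq (by positivity) (sq_sqrt (by positivity)) hs).symm

theorem tendsto_integral_one_add_div_sqrt_pow_mul_exp_neg :
    Tendsto (fun k : ℕ => ∫ s in Ioi 0, (1 + s / √(k + 1)) ^ k * exp (-(√(k + 1) * s))) atTop
      (𝓝 (√(2 * π) / 2)) := by
  have hgauss : ∫ s in Ioi 0, exp (-(s ^ 2 / 2)) = √(2 * π) / 2 := by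
    calc ∫ s in Ioi 0, exp (-(s ^ 2 / 2)) = ∫ s in Ioi 0, exp (-(1 / 2) * s ^ 2) := by
          congr with s; ring_nf
      _ = √(2 * π) / 2 := by rw [integral_gaussian_Ioi]; congr 2; ring
  rw [← hgauss]
  refine tendsto_integral_of_dominated_convergence (fun s => exp (1 / 2 - s / 2))
    (fun k => by fun_prop) ?_ (fun k => ?_) ?_
  · simpa only [← exp_add, neg_mul, ← sub_eq_add_neg, one_div_mul_eq_div] using
      (exp_neg_integrableOn_Ioi 0 one_half_pos).const_mul (exp (1 / 2))
  · filter_upwards [ae_restrict_mem measurableSet_Ioi] with s hs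
    rw [norm_of_nonneg (by have : 0 ≤ s := hs.out.le; positivity)]
    exact one_add_div_pow_mul_exp_neg_le (one_le_sqrt.mpr (by simp)) (sq_sqrt (by positivity))
      hs.out.le
  · filter_upwards [ae_restrict_mem measurableSet_Ioi] with s hs
    exact tendsto_one_add_div_sqrt_pow_mul_exp_neg hs.out.le

theorem exp_partial_sum_below_n :
    Tendsto (fun n : ℕ =>
        Real.exp (-(n : ℝ)) * ∑ m ∈ Finset.range n, (n : ℝ) ^ m / m.factorial)
      atTop (nhds (1 / 2)) := by
  rw [← tendsto_add_atTop_iff_nat 1]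
  have hlim := tendsto_sqrt_mul_pow_mul_exp_neg_div_factorial.mul
    tendsto_integral_one_add_div_sqrt_pow_mul_exp_neg
  rw [inv_mul_eq_div, div_div_cancel_left' (by positivity), inv_eq_one_div] at hlim
  refine hlim.congr fun k => ?_
  push_cast
  exact (exp_neg_mul_sum_range_eq_mul_integral k (by positivity)).symm
end

section
/- As n → ∞ along the positive integers, (∫_0^n x^n e^{−x} dx)/n! converges to 1/2. -/
open Filter MeasureTheory Real Set Topology

/-!
Substituting `x = n + √n t` and dividing by the maximum `n ^ n e⁻ⁿ` of the integrand turns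
`x ^ n e⁻ˣ` on `(0, n]` into `(1 + t/√n) ^ n e^(-√n t) = exp (n (log (1 + t/√n) - t/√n))` on
`(-√n, 0]`, which tends to `e^(-t²/2)` and is dominated by it because `log (1 + s) ≤ s - s²/2`
for `s ≤ 0`. Hence the integral is `√n nⁿ e⁻ⁿ (√(2π)/2 + o(1))`, while Stirling's formula gives
`n! = √(2πn) nⁿ e⁻ⁿ (1 + o(1))`.
-/

lemma natCast_mul_div_sqrt (n : ℕ) (t : ℝ) : n * (t / √n) = √n * t := by
  rcases eq_or_ne n 0 with rfl | hn
  · simp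
  have hsqrt : (0 : ℝ) < √n := by positivity
  field_simp
  rw [sq_sqrt (Nat.cast_nonneg n)]
  ring

lemma natCast_mul_div_sqrt_sq {n : ℕ} (hn : n ≠ 0) (t : ℝ) : n * (t / √n) ^ 2 = t ^ 2 := by
  have hsqrt : (0 : ℝ) < √n := by positivity
  rw [div_pow, sq_sqrt (Nat.cast_nonneg n)]
  field_simp

lemma log_one_sub_le_neg_sub_sq_div_two {u : ℝ} (h0 : 0 ≤ u) (h1 : u < 1) :
    log (1 - u) ≤ -u - u ^ 2 / 2 := by
  have hu : |u| < 1 := by rwa [abs_of_nonneg h0]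
  have hsum := sum_le_hasSum (Finset.range 2) (fun i _ => by positivity)
    (hasSum_pow_div_log_of_abs_lt_one hu)
  norm_num [Finset.sum_range_succ] at hsum
  linarith

lemma tendsto_sqrt_natCast_atTop : Tendsto (fun n : ℕ => √n) atTop atTop :=
  tendsto_sqrt_atTop.comp tendsto_natCast_atTop_atTop

lemma tendsto_natCast_mul_log_one_add_div_sqrt_sub (t : ℝ) :
    Tendsto (fun n : ℕ => n * (log (1 + t / √n) - t / √n)) atTop (𝓝 (-(t ^ 2 / 2))) := by
  set h : ℕ → ℝ := fun n => t / √n with h_def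
  have h_lim : Tendsto h atTop (𝓝 0) := by
    simpa [h_def, div_eq_mul_inv] using tendsto_sqrt_natCast_atTop.inv_tendsto_atTop.const_mul t
  have remainder_bound : ∀ᶠ n : ℕ in atTop,
      ‖n * (log (1 + h n) - h n + h n ^ 2 / 2)‖ ≤ |t| ^ 3 * (√n)⁻¹ / (1 - |h n|) := by
    filter_upwards [h_lim.abs.eventually (gt_mem_nhds (by norm_num : |(0:ℝ)| < 1)),
      eventually_ne_atTop 0] with n h_small hn
    have hsqrt : (0 : ℝ) < √n := by positivity
    have taylor := abs_log_sub_add_sum_range_le (x := -h n) (by rwa [abs_neg]) 2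
    norm_num [Finset.sum_range_succ] at taylor
    calc ‖n * (log (1 + h n) - h n + h n ^ 2 / 2)‖
        = n * |-h n + h n ^ 2 / 2 + log (1 + h n)| := by
          rw [Real.norm_eq_abs, abs_mul, Nat.abs_cast]; ring_nf
      _ ≤ n * (|h n| ^ 3 / (1 - |h n|)) := by gcongr
      _ = |t| ^ 3 * (√n)⁻¹ / (1 - |h n|) := by
          rw [h_def, abs_div, abs_of_pos hsqrt]
          field_simp
          rw [sq_sqrt (Nat.cast_nonneg n)]
          ring
  have remainder_lim : Tendsto (fun n : ℕ => n * (log (1 + h n) - h n + h n ^ 2 / 2))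
      atTop (𝓝 0) := by
    refine squeeze_zero_norm' remainder_bound ?_
    convert (tendsto_sqrt_natCast_atTop.inv_tendsto_atTop.const_mul (|t| ^ 3)).div
      (tendsto_const_nhds.sub h_lim.abs) (by norm_num : (1:ℝ) - |0| ≠ 0) using 2 <;> simp
  rw [← zero_sub]
  refine (remainder_lim.sub_const (t ^ 2 / 2)).congr' ?_
  filter_upwards [eventually_ne_atTop 0] with n hn
  linear_combination natCast_mul_div_sqrt_sq hn t / 2

/-- `x ^ n * exp (-x)` at `x = n + √n * t`, divided by its maximum value `n ^ n * exp (-n)` and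
restricted to `0 < x ≤ n`. -/
noncomputable def gammaKernel (n : ℕ) (t : ℝ) : ℝ :=
  (Ioc (-√n) 0).indicator (fun t => (1 + t / √n) ^ n * exp (-(√n * t))) t

lemma one_add_div_sqrt_pow_mul_exp_eq {n : ℕ} (hn : n ≠ 0) {t : ℝ} (ht : -√n < t) :
    (1 + t / √n) ^ n * exp (-(√n * t)) = exp (n * (log (1 + t / √n) - t / √n)) := by
  have hsqrt : (0 : ℝ) < √n := by positivity
  have hpos : 0 < 1 + t / √n := by
    have : -1 < t / √n := by rw [lt_div_iff₀ hsqrt]; linarith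
    linarith
  rw [mul_sub, exp_sub, ← exp_log hpos, ← exp_nat_mul, exp_log hpos, natCast_mul_div_sqrt,
    exp_neg, ← div_eq_mul_inv]

lemma abs_gammaKernel_le (n : ℕ) (t : ℝ) : |gammaKernel n t| ≤ exp (-(t ^ 2 / 2)) := by
  by_cases ht : t ∈ Ioc (-√n) 0
  · have hn : n ≠ 0 := by rintro rfl; simp at ht
    have hsqrt : (0 : ℝ) < √n := by positivity
    rw [gammaKernel, indicator_of_mem ht, one_add_div_sqrt_pow_mul_exp_eq hn ht.1,
      abs_of_pos (exp_pos _), exp_le_exp]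
    have hu0 : 0 ≤ -(t / √n) := neg_nonneg.2 (div_nonpos_of_nonpos_of_nonneg ht.2 hsqrt.le)
    have hu1 : -(t / √n) < 1 := by rw [neg_lt, lt_div_iff₀ hsqrt]; linarith [ht.1]
    have hlog := log_one_sub_le_neg_sub_sq_div_two hu0 hu1
    rw [sub_neg_eq_add] at hlog
    nlinarith [natCast_mul_div_sqrt_sq hn t]
  · rw [gammaKernel, indicator_of_notMem ht, abs_zero]
    positivity

lemma tendsto_gammaKernel (t : ℝ) :
    Tendsto (fun n => gammaKernel n t) atTop
      (𝓝 ((Iic 0).indicator (fun t => exp (-(t ^ 2 / 2))) t)) := by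
  by_cases ht : t ≤ 0
  · rw [indicator_of_mem (mem_Iic.2 ht)]
    refine ((continuous_exp.tendsto _).comp
      (tendsto_natCast_mul_log_one_add_div_sqrt_sub t)).congr' ?_
    filter_upwards [tendsto_sqrt_natCast_atTop.eventually_gt_atTop (-t), eventually_ne_atTop 0]
      with n hsqrt hn
    have ht' : t ∈ Ioc (-√n) 0 := ⟨neg_lt.1 hsqrt, ht⟩
    rw [Function.comp_apply, gammaKernel, indicator_of_mem ht',
      one_add_div_sqrt_pow_mul_exp_eq hn ht'.1]
  · rw [indicator_of_notMem (by simpa using ht)]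
    refine tendsto_const_nhds.congr fun n => ?_
    rw [gammaKernel, indicator_of_notMem fun h => ht h.2]

lemma integral_Iic_exp_neg_sq_div_two :
    ∫ t in Iic (0 : ℝ), exp (-(t ^ 2 / 2)) = √(2 * π) / 2 := by
  have h := integral_gaussian_Ioi (1 / 2)
  rw [← neg_zero, ← integral_comp_neg_Iic] at h
  simp only [neg_sq, neg_mul, one_div, inv_mul_eq_div, div_inv_eq_mul] at h
  rw [h, mul_comm]

lemma tendsto_integral_gammaKernel :
    Tendsto (fun n => ∫ t, gammaKernel n t) atTop (𝓝 (√(2 * π) / 2)) := by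
  rw [← integral_Iic_exp_neg_sq_div_two, ← integral_indicator measurableSet_Iic]
  refine tendsto_integral_of_dominated_convergence (fun t => exp (-(t ^ 2 / 2)))
    (fun n => ?_) ?_ (fun n => ?_) (ae_of_all _ tendsto_gammaKernel)
  · exact (Continuous.aestronglyMeasurable (by fun_prop)).indicator measurableSet_Ioc
  · simpa [div_eq_inv_mul] using integrable_exp_neg_mul_sq (b := 1 / 2) (by norm_num)
  · exact ae_of_all _ fun t => abs_gammaKernel_le n t

lemma integral_pow_mul_exp_neg_eq (n : ℕ) :
    ∫ x in (0 : ℝ)..n, x ^ n * exp (-x) = √n * (n ^ n * exp (-n) * ∫ t, gammaKernel n t) := by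
  rcases eq_or_ne n 0 with rfl | hn
  · simp
  have hsqrt : (0 : ℝ) < √n := by positivity
  have kernel_eq : ∫ t, gammaKernel n t = ∫ t in -√n..0, (1 + t / √n) ^ n * exp (-(√n * t)) := by
    rw [intervalIntegral.integral_of_le (by linarith), ← integral_indicator measurableSet_Ioc]
    rfl
  have change_of_variables := intervalIntegral.integral_comp_mul_add
    (fun x => x ^ n * exp (-x)) hsqrt.ne' (n : ℝ) (a := -√n) (b := 0)
  rw [mul_neg, ← sq, sq_sqrt (Nat.cast_nonneg n), neg_add_cancel, mul_zero, zero_add,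
    smul_eq_mul] at change_of_variables
  rw [← inv_mul_eq_iff_eq_mul₀ hsqrt.ne', ← change_of_variables, kernel_eq,
    ← intervalIntegral.integral_const_mul]
  congr 1 with t
  rw [← natCast_mul_div_sqrt n t, neg_add, exp_add,
    show n * (t / √n) + n = n * (1 + t / √n) by ring, mul_pow]
  ring

lemma factorial_eq_stirlingSeq_mul {n : ℕ} (hn : n ≠ 0) :
    (n.factorial : ℝ) = Stirling.stirlingSeq n * (√2 * √n * (n ^ n * exp (-n))) := by
  rw [Stirling.stirlingSeq, ← sqrt_mul zero_le_two, div_pow, exp_neg, ← exp_nat_mul, mul_one,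
    div_eq_mul_inv (_ ^ n), div_mul_cancel₀]
  positivity

theorem integral_pow_mul_exp_div_factorial :
    Tendsto (fun n : ℕ =>
        (∫ x in (0:ℝ)..(n : ℝ), x ^ n * Real.exp (-x)) / n.factorial)
      atTop (nhds (1 / 2)) := by
  have limit := tendsto_integral_gammaKernel.div
    (Stirling.tendsto_stirlingSeq_sqrt_pi.const_mul √2) (by positivity)
  rw [show √(2 * π) / 2 / (√2 * √π) = 1 / 2 by rw [sqrt_mul zero_le_two]; field_simp] at limit
  refine limit.congr' ?_
  filter_upwards [eventually_ne_atTop 0] with n hn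
  rw [Pi.div_apply, integral_pow_mul_exp_neg_eq, factorial_eq_stirlingSeq_mul hn]
  have stirling_pos := (Stirling.sqrt_pi_le_stirlingSeq hn).trans_lt' (by positivity)
  field_simp
end

section
/- For every α > 0 there exist constants c₁ > 0, c₂ > 0 (depending only on α) and a positive integer N such that for all integers n ≥ N, ∑_{m=n}^{∞} (n^m/m!)^α ≥ c₁ · exp(c₂ n). -/
open Real

private lemma factorial_upper (n : ℕ) (hn : 1 ≤ n) :
    (n.factorial : ℝ) ≤ exp 1 * Real.sqrt n * ((n : ℝ) / exp 1) ^ n := by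
  obtain ⟨m, rfl⟩ := Nat.exists_eq_add_of_le hn
  set k := 1 + m with hk
  have hkpos : (0:ℝ) < k := by positivity
  have hpos : 0 < Stirling.stirlingSeq k := by
    rw [Stirling.stirlingSeq]
    have h1 : (0:ℝ) < (k.factorial : ℝ) := by positivity
    have h2 : (0:ℝ) < Real.sqrt (2 * k) * ((k : ℝ) / exp 1) ^ k := by positivity
    positivity
  have hmono : Real.log (Stirling.stirlingSeq k) ≤ Real.log (Stirling.stirlingSeq 1) := by
    have := Stirling.log_stirlingSeq'_antitone (Nat.zero_le m)
    simpa [hk, Nat.succ_eq_add_one, add_comm] using this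
  have hone : (0:ℝ) < Stirling.stirlingSeq 1 := by
    rw [Stirling.stirlingSeq_one]; positivity
  have hle : Stirling.stirlingSeq k ≤ Stirling.stirlingSeq 1 :=
    (Real.log_le_log_iff hpos hone).mp hmono
  rw [Stirling.stirlingSeq_one] at hle
  rw [Stirling.stirlingSeq] at hle
  have hden : (0:ℝ) < Real.sqrt (2 * k) * ((k : ℝ) / exp 1) ^ k := by positivity
  rw [div_le_iff₀ hden] at hle
  refine hle.trans_eq ?_
  rw [show (2 * (k:ℝ)) = 2 * k by norm_num, Real.sqrt_mul (by norm_num) (k:ℝ)]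
  have h2 : Real.sqrt 2 ≠ 0 := by positivity
  field_simp

private lemma pow_div_factorial_ge (n : ℕ) (hn : 4 ≤ n) :
    exp ((n : ℝ) / 2) ≤ (n : ℝ) ^ n / n.factorial := by
  have hn1 : 1 ≤ n := le_trans (by norm_num) hn
  have hnR : (4:ℝ) ≤ (n:ℝ) := by exact_mod_cast hn
  have hfac : (0:ℝ) < (n.factorial : ℝ) := by positivity
  rw [le_div_iff₀ hfac]
  have h1 : exp ((n:ℝ)/2) * (n.factorial : ℝ) ≤
      exp ((n:ℝ)/2) * (exp 1 * Real.sqrt n * ((n : ℝ) / exp 1) ^ n) := by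
    exact mul_le_mul_of_nonneg_left (factorial_upper n hn1) (exp_nonneg _)
  refine h1.trans ?_
  have hsqrt : Real.sqrt n ≤ (n:ℝ)/2 := by
    rw [show ((n:ℝ)/2) = Real.sqrt (((n:ℝ)/2)^2) by
      rw [Real.sqrt_sq (by linarith)]]
    apply Real.sqrt_le_sqrt
    nlinarith
  have hhalf : (n:ℝ)/2 ≤ exp ((n:ℝ)/2) / exp 1 := by
    rw [le_div_iff₀ (exp_pos 1)]
    calc (n:ℝ)/2 * exp 1 ≤ exp ((n:ℝ)/2 - 1) * exp 1 := by
          have := Real.add_one_le_exp ((n:ℝ)/2 - 1)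
          nlinarith [Real.exp_pos (1:ℝ)]
    _ = exp ((n:ℝ)/2 - 1 + 1) := (Real.exp_add _ _).symm
    _ = exp ((n:ℝ)/2) := by ring_nf
  have hs : Real.sqrt n ≤ exp ((n:ℝ)/2) / exp 1 := hsqrt.trans hhalf
  have hpow : ((n : ℝ) / exp 1) ^ n = (n:ℝ)^n / exp n := by
    rw [div_pow, ← Real.exp_nat_mul, mul_one]
  rw [hpow]
  have hexp : exp ((n:ℝ)/2) * exp ((n:ℝ)/2) = exp n := by
    rw [← Real.exp_add]; ring_nf
  have key : exp ((n:ℝ)/2) * (exp 1 * Real.sqrt n) ≤ exp n := by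
    calc exp ((n:ℝ)/2) * (exp 1 * Real.sqrt n)
        ≤ exp ((n:ℝ)/2) * (exp 1 * (exp ((n:ℝ)/2) / exp 1)) := by
          apply mul_le_mul_of_nonneg_left _ (exp_nonneg _)
          exact mul_le_mul_of_nonneg_left hs (exp_nonneg _)
      _ = exp ((n:ℝ)/2) * exp ((n:ℝ)/2) := by field_simp
      _ = exp n := hexp
  calc exp ((n:ℝ)/2) * (exp 1 * Real.sqrt n * ((n:ℝ)^n / exp n))
      = (exp ((n:ℝ)/2) * (exp 1 * Real.sqrt n)) * ((n:ℝ)^n / exp n) := by ring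
    _ ≤ exp n * ((n:ℝ)^n / exp n) := by
        apply mul_le_mul_of_nonneg_right key
        positivity
    _ = (n:ℝ)^n := by field_simp

private lemma summable_aux (α : ℝ) (hα : 0 < α) (n : ℕ) :
    Summable (fun m : ℕ => ((n : ℝ) ^ (n + m) / (n + m).factorial) ^ α) := by
  apply summable_of_ratio_norm_eventually_le (r := (1/2 : ℝ) ^ α)
  · exact Real.rpow_lt_one (by norm_num) (by norm_num) hα
  · filter_upwards [Filter.eventually_ge_atTop n] with m hm
    have h0 : (0:ℝ) ≤ (n : ℝ) ^ (n + m) / (n + m).factorial := by positivity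
    have h0' : (0:ℝ) ≤ (n : ℝ) ^ (n + (m+1)) / (n + (m+1)).factorial := by positivity
    rw [Real.norm_of_nonneg (Real.rpow_nonneg h0' _),
      Real.norm_of_nonneg (Real.rpow_nonneg h0 _)]
    have hsplit : (n : ℝ) ^ (n + (m+1)) / (n + (m+1)).factorial
        = ((n:ℝ) / (n + m + 1)) * ((n : ℝ) ^ (n + m) / (n + m).factorial) := by
      rw [show n + (m+1) = (n + m) + 1 by ring, pow_succ, Nat.factorial_succ]
      push_cast
      have hf : ((n+m).factorial : ℝ) ≠ 0 := by positivity
      have hnm : ((n:ℝ) + m + 1) ≠ 0 := by positivity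
      field_simp
    rw [hsplit, Real.mul_rpow (by positivity) h0]
    apply mul_le_mul_of_nonneg_right _ (Real.rpow_nonneg h0 _)
    apply Real.rpow_le_rpow (by positivity) _ hα.le
    rw [div_le_div_iff₀ (by positivity) (by norm_num)]
    have : (n:ℝ) ≤ m + 1 := by exact_mod_cast hm.trans (Nat.le_succ m)
    linarith

theorem tail_sum_rpow_exponential_lower_bound (α : ℝ) (hα : 0 < α) :
    ∃ c₁ > (0:ℝ), ∃ c₂ > (0:ℝ), ∃ N : ℕ, 0 < N ∧ ∀ n : ℕ, N ≤ n →
      c₁ * Real.exp (c₂ * n) ≤ ∑' m : ℕ, ((n : ℝ) ^ (n + m) / (n + m).factorial) ^ α := by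
  refine ⟨1, one_pos, α/2, by positivity, 4, by norm_num, fun n hn => ?_⟩
  have hsum := summable_aux α hα n
  have hfirst : ((n : ℝ) ^ (n + 0) / (n + 0).factorial) ^ α ≤
      ∑' m : ℕ, ((n : ℝ) ^ (n + m) / (n + m).factorial) ^ α := by
    apply Summable.le_tsum hsum 0
    intro j _
    positivity
  simp only [Nat.add_zero] at hfirst
  refine le_trans ?_ hfirst
  rw [one_mul]
  have hkey := pow_div_factorial_ge n hn
  have : Real.exp (α/2 * n) = (Real.exp ((n:ℝ)/2)) ^ α := by
    rw [← Real.exp_mul]; ring_nf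
  rw [this]
  exact Real.rpow_le_rpow (exp_nonneg _) hkey hα.le
end

section
/- Let a > 0, b > 0 and C > 0. Then lim_{t→∞} (1/t) · log E_{a,b}(C t^a) = C^{1/a}. -/
/-!
Put `s = C ^ (1 / a) * t`, so that `C * t ^ a = s ^ a`; it suffices to show
`log E_{a,b}(s ^ a) / s → 1`.

Upper bound: `Γ` is bounded below on `(0, ∞)` and `Γ x ≥ ⌊x - 1⌋!` for `x ≥ 2`, so together with
`w ^ n / n! ≤ e ^ w` we get `w ^ x / Γ x ≤ K w ^ 2 e ^ w` for all `x > 0`, `w ≥ 1`. Taking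
`w = l s` with `l > 1` dominates the series by a geometric series of ratio `l ^ (-a)`, whence
`log E_{a,b}(s ^ a) ≤ l s + O(log s)`.

Lower bound: keep the single term `k = ⌈s / a⌉`. Monotonicity of `Γ` on `[2, ∞)` and the
Stirling upper bound for factorials give `log Γ x ≤ x log x - x + O(log x)`, whence
`log E_{a,b}(s ^ a) ≥ s - O(log s)`.
-/

open Filter

open Real
open scoped Nat

theorem Stirling.log_factorial_le_stirling {n : ℕ} (hn : n ≠ 0) :
    log n ! ≤ n * log n - n + log n / 2 + 1 := by
  have hn' : (0 : ℝ) < n := by positivity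
  have hseq : stirlingSeq n ≤ exp 1 / √2 := by
    obtain ⟨m, rfl⟩ := Nat.exists_eq_succ_of_ne_zero hn
    simpa using stirlingSeq'_antitone (Nat.zero_le m)
  have hfac : (n ! : ℝ) ≤ exp 1 * √n * (n / exp 1) ^ n := by
    rw [stirlingSeq, div_le_div_iff₀ (by positivity) (by positivity)] at hseq
    rw [sqrt_mul zero_le_two] at hseq
    have h2 : (0 : ℝ) < √2 := by positivity
    nlinarith [h2]
  calc log n ! ≤ log (exp 1 * √n * (n / exp 1) ^ n) := log_le_log (by positivity) hfac
    _ = n * log n - n + log n / 2 + 1 := by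
      rw [log_mul (by positivity) (by positivity), log_mul (by positivity) (by positivity),
        log_exp, log_sqrt hn'.le, log_pow, log_div hn'.ne' (exp_pos 1).ne', log_exp]
      ring

theorem Real.log_Gamma_le {x : ℝ} (hx : 2 ≤ x) :
    log (Gamma x) ≤ x * log x - x + log x / 2 + 1 := by
  set n := ⌈x - 1⌉₊
  have hn_ge : x - 1 ≤ n := Nat.le_ceil _
  have hn_lt : (n : ℝ) < x := by linarith [Nat.ceil_lt_add_one (by linarith : 0 ≤ x - 1)]
  have hn1 : (1 : ℝ) ≤ n := by linarith
  have hGamma : Gamma x ≤ n ! := by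
    rw [← Gamma_nat_eq_factorial]
    exact Gamma_strictMonoOn_Ici.monotoneOn hx (by simp; linarith) (by linarith)
  have hlog : 1 - n / x ≤ log x - log n := by
    rw [← log_div (by linarith) (by linarith)]
    simpa using one_sub_inv_le_log_of_pos (by positivity : 0 < x / n)
  have hmono : n * log n - n ≤ x * log x - x := by
    have h := mul_le_mul_of_nonneg_left hlog (by linarith : 0 ≤ x)
    rw [mul_sub, mul_one, mul_div_cancel₀ _ (by linarith)] at h
    nlinarith [log_nonneg hn1]
  have hlogn : log n ≤ log x := log_le_log (by linarith) hn_lt.le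
  calc log (Gamma x) ≤ log n ! := log_le_log (Gamma_pos_of_pos (by linarith)) hGamma
    _ ≤ n * log n - n + log n / 2 + 1 :=
        Stirling.log_factorial_le_stirling (Nat.ceil_pos.2 (by linarith)).ne'
    _ ≤ x * log x - x + log x / 2 + 1 := by linarith

theorem Real.rpow_div_Gamma_le_sq_mul_exp {x w : ℝ} (hx : 2 ≤ x) (hw : 1 ≤ w) :
    w ^ x / Gamma x ≤ w ^ 2 * exp w := by
  set n := ⌊x - 1⌋₊
  have hn_le : (n : ℝ) ≤ x - 1 := Nat.floor_le (by linarith)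
  have hn_gt : x - 1 < n + 1 := Nat.lt_floor_add_one _
  have hn1 : (1 : ℝ) ≤ n := by
    exact_mod_cast Nat.one_le_floor_iff _ |>.2 (by linarith)
  have hGamma : (n ! : ℝ) ≤ Gamma x := by
    rw [← Gamma_nat_eq_factorial]
    exact Gamma_strictMonoOn_Ici.monotoneOn (by simp; linarith) hx (by linarith)
  have hpow : w ^ x ≤ w ^ 2 * w ^ n := by
    rw [← pow_add, ← rpow_natCast]
    exact rpow_le_rpow_of_exponent_le hw (by push_cast; linarith)
  calc w ^ x / Gamma x ≤ w ^ 2 * w ^ n / n ! :=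
        div_le_div₀ (by positivity) hpow (by positivity) hGamma
    _ = w ^ 2 * (w ^ n / n !) := mul_div_assoc _ _ _
    _ ≤ w ^ 2 * exp w := by gcongr; exact pow_div_factorial_le_exp w (by linarith) n

theorem Real.exists_rpow_div_Gamma_le :
    ∃ K > 0, ∀ x > 0, ∀ w ≥ 1, w ^ x / Gamma x ≤ K * w ^ 2 * exp w := by
  obtain ⟨x₀, hx₀, hmin⟩ := exists_isMinOn_Gamma_Ioi
  set m := Gamma x₀
  have hm : 0 < m := Gamma_pos_of_pos (by linarith [hx₀.1])
  have hm1 : m ≤ 1 := by simpa using hmin (Set.mem_Ioi.2 one_pos)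
  refine ⟨m⁻¹, inv_pos.2 hm, fun x hx w hw => ?_⟩
  have hK : 1 ≤ m⁻¹ := one_le_inv₀ hm |>.2 hm1
  rcases le_or_gt 2 x with hx2 | hx2
  · calc w ^ x / Gamma x ≤ w ^ 2 * exp w := rpow_div_Gamma_le_sq_mul_exp hx2 hw
      _ ≤ m⁻¹ * w ^ 2 * exp w := by
        rw [mul_assoc]; exact le_mul_of_one_le_left (by positivity) hK
  · have hpow : w ^ x ≤ w ^ 2 := by
      rw [← rpow_two]; exact rpow_le_rpow_of_exponent_le hw hx2.le
    calc w ^ x / Gamma x ≤ w ^ 2 / m :=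
          div_le_div₀ (by positivity) hpow hm (hmin (Set.mem_Ioi.2 hx))
      _ = m⁻¹ * w ^ 2 * 1 := by ring
      _ ≤ m⁻¹ * w ^ 2 * exp w := by gcongr; exact one_le_exp (by linarith)

theorem tendsto_mul_add_mul_log_add_div (μ A B : ℝ) :
    Tendsto (fun s => (μ * s + A * log s + B) / s) atTop (nhds μ) := by
  have hlog := isLittleO_log_id_atTop.tendsto_div_nhds_zero.const_mul A
  have hconst := tendsto_inv_atTop_zero.const_mul B
  have hsum := (hlog.add hconst).const_add μ
  rw [mul_zero, mul_zero, add_zero, add_zero] at hsum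
  refine hsum.congr' ?_
  filter_upwards [eventually_gt_atTop 0] with s hs
  simp only [id]
  field_simp
  ring

section MittagLeffler

variable {a b : ℝ}

theorem pow_div_Gamma_nonneg (ha : 0 < a) (hb : 0 < b) {z : ℝ} (hz : 0 ≤ z) (k : ℕ) :
    0 ≤ z ^ k / Gamma (a * k + b) :=
  div_nonneg (pow_nonneg hz k) (Gamma_pos_of_pos (by positivity)).le

theorem rpow_pow_div_Gamma_le_geometric {K : ℝ}
    (hK : ∀ x > 0, ∀ w ≥ 1, w ^ x / Gamma x ≤ K * w ^ 2 * exp w) (ha : 0 < a) (hb : 0 < b)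
    {s l : ℝ} (hs : 1 ≤ s) (hl : 1 ≤ l) (k : ℕ) :
    (s ^ a) ^ k / Gamma (a * k + b) ≤ K * (l * s) ^ (2 - b) * exp (l * s) * ((l ^ a)⁻¹) ^ k := by
  set w := l * s
  have hw : 1 ≤ w := one_le_mul_of_one_le_of_one_le hl hs
  have hw0 : 0 < w := by linarith
  have hsplit : (s ^ a) ^ k = w ^ (a * k + b) * (w ^ b)⁻¹ * ((l ^ a)⁻¹) ^ k := by
    rw [rpow_add hw0, rpow_mul hw0.le, rpow_natCast,
      show w ^ a = l ^ a * s ^ a from mul_rpow (by linarith) (by linarith)]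
    have hla : 0 < l ^ a := rpow_pos_of_pos (by linarith) a
    rw [mul_pow, inv_pow]
    field_simp
  have hsub : w ^ 2 * (w ^ b)⁻¹ = w ^ (2 - b) := by
    rw [rpow_sub hw0, rpow_two, div_eq_mul_inv]
  calc (s ^ a) ^ k / Gamma (a * k + b)
      = w ^ (a * k + b) / Gamma (a * k + b) * (w ^ b)⁻¹ * ((l ^ a)⁻¹) ^ k := by
        rw [hsplit]; ring
    _ ≤ K * w ^ 2 * exp w * (w ^ b)⁻¹ * ((l ^ a)⁻¹) ^ k := by
        gcongr; exact hK _ (by positivity) w hw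
    _ = K * w ^ (2 - b) * exp w * ((l ^ a)⁻¹) ^ k := by rw [← hsub]; ring

theorem summable_mittagLeffler (ha : 0 < a) (hb : 0 < b) {z : ℝ} (hz : 0 ≤ z) :
    Summable fun k : ℕ => z ^ k / Gamma (a * k + b) := by
  obtain ⟨K, -, hK⟩ := exists_rpow_div_Gamma_le
  set s := max 1 (z ^ (1 / a))
  have hzs : z ≤ s ^ a := by
    calc z = (z ^ (1 / a)) ^ a := by rw [← rpow_mul hz, one_div_mul_cancel ha.ne', rpow_one]
      _ ≤ s ^ a := rpow_le_rpow (by positivity) (le_max_right _ _) ha.le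
  have hratio : (2 ^ a)⁻¹ < (1 : ℝ) := inv_lt_one_of_one_lt₀ (one_lt_rpow one_lt_two ha)
  have hgeom := (summable_geometric_of_lt_one (by positivity) hratio).mul_left
    (K * (2 * s) ^ (2 - b) * exp (2 * s))
  refine hgeom.of_nonneg_of_le (pow_div_Gamma_nonneg ha hb hz) fun k => ?_
  calc z ^ k / Gamma (a * k + b) ≤ (s ^ a) ^ k / Gamma (a * k + b) := by
        gcongr
    _ ≤ _ := rpow_pow_div_Gamma_le_geometric hK ha hb (le_max_left _ _) one_le_two k

theorem pow_div_Gamma_le_mittagLeffler (ha : 0 < a) (hb : 0 < b) {z : ℝ} (hz : 0 ≤ z) (k : ℕ) :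
    z ^ k / Gamma (a * k + b) ≤ mittagLeffler a b z :=
  (summable_mittagLeffler ha hb hz).le_tsum k fun j _ => pow_div_Gamma_nonneg ha hb hz j

theorem mittagLeffler_pos (ha : 0 < a) (hb : 0 < b) {z : ℝ} (hz : 0 ≤ z) :
    0 < mittagLeffler a b z := by
  refine lt_of_lt_of_le ?_ (pow_div_Gamma_le_mittagLeffler ha hb hz 0)
  simpa using Gamma_pos_of_pos hb

theorem mittagLeffler_rpow_le {K : ℝ}
    (hK : ∀ x > 0, ∀ w ≥ 1, w ^ x / Gamma x ≤ K * w ^ 2 * exp w) (ha : 0 < a) (hb : 0 < b)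
    {s l : ℝ} (hs : 1 ≤ s) (hl : 1 < l) :
    mittagLeffler a b (s ^ a) ≤ K * (l * s) ^ (2 - b) * exp (l * s) / (1 - (l ^ a)⁻¹) := by
  have hq := inv_lt_one_of_one_lt₀ (one_lt_rpow hl ha)
  have hq0 : 0 ≤ (l ^ a)⁻¹ := by positivity
  calc mittagLeffler a b (s ^ a)
      ≤ ∑' k : ℕ, K * (l * s) ^ (2 - b) * exp (l * s) * ((l ^ a)⁻¹) ^ k :=
        Summable.tsum_le_tsum (rpow_pow_div_Gamma_le_geometric hK ha hb hs hl.le)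
          (summable_mittagLeffler ha hb (by positivity))
          ((summable_geometric_of_lt_one hq0 hq).mul_left _)
    _ = K * (l * s) ^ (2 - b) * exp (l * s) / (1 - (l ^ a)⁻¹) := by
        rw [tsum_mul_left, tsum_geometric_of_lt_one hq0 hq, div_eq_mul_inv]

theorem log_mittagLeffler_rpow_le {K : ℝ} (hK0 : 0 < K)
    (hK : ∀ x > 0, ∀ w ≥ 1, w ^ x / Gamma x ≤ K * w ^ 2 * exp w) (ha : 0 < a) (hb : 0 < b)
    {s l : ℝ} (hs : 1 ≤ s) (hl : 1 < l) :
    log (mittagLeffler a b (s ^ a)) ≤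
      l * s + (2 - b) * log s + (log K + (2 - b) * log l - log (1 - (l ^ a)⁻¹)) := by
  have hq : 0 < 1 - (l ^ a)⁻¹ := sub_pos.2 (inv_lt_one_of_one_lt₀ (one_lt_rpow hl ha))
  calc log (mittagLeffler a b (s ^ a))
      ≤ log (K * (l * s) ^ (2 - b) * exp (l * s) / (1 - (l ^ a)⁻¹)) :=
        log_le_log (mittagLeffler_pos ha hb (by positivity)) (mittagLeffler_rpow_le hK ha hb hs hl)
    _ = _ := by
        rw [log_div (by positivity) hq.ne', log_mul (by positivity) (exp_pos _).ne',
          log_mul hK0.ne' (by positivity), log_exp, log_rpow (by positivity),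
          log_mul (by positivity) (by positivity)]
        ring

theorem le_log_mittagLeffler_rpow (ha : 0 < a) (hb : 0 < b) {s : ℝ} (hs : 2 ≤ s) :
    s - (b + 1) * log s - (a + b + 1) ^ 2 ≤ log (mittagLeffler a b (s ^ a)) := by
  set k := ⌈s / a⌉₊
  set x := a * k + b with hx
  have hk_ge : s ≤ a * k := by
    have := mul_le_mul_of_nonneg_left (Nat.le_ceil (s / a)) ha.le
    rwa [mul_div_cancel₀ _ ha.ne'] at this
  have hk_lt : a * k < s + a := by
    have := mul_lt_mul_of_pos_left (Nat.ceil_lt_add_one (by positivity : 0 ≤ s / a)) ha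
    rwa [mul_add, mul_div_cancel₀ _ ha.ne', mul_one] at this
  have hs0 : 0 < s := by linarith
  have hlogs : 0 ≤ log s := log_nonneg (by linarith)
  have hterm : log ((s ^ a) ^ k / Gamma x) = x * log s - b * log s - log (Gamma x) := by
    rw [log_div (by positivity) (Gamma_pos_of_pos (by positivity)).ne', log_pow,
      log_rpow hs0, hx]
    ring
  have hgap : log x - log s ≤ (x - s) / s := by
    rw [← log_div (by positivity) hs0.ne', sub_div, div_self hs0.ne']
    exact log_le_sub_one_of_pos (by positivity)
  have hgap' : (x - s) / s ≤ (a + b) / 2 :=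
    div_le_div₀ (by positivity) (by linarith) (by norm_num) hs
  have hx_gap : x * log x - x * log s ≤ (x - s) + (a + b) ^ 2 / 2 := by
    calc x * log x - x * log s ≤ x * ((x - s) / s) := by
          rw [← mul_sub]; exact mul_le_mul_of_nonneg_left hgap (by positivity)
      _ = (x - s) + (x - s) ^ 2 / s := by field_simp; ring
      _ ≤ (x - s) + (a + b) ^ 2 / 2 := by
          have hsq := pow_le_pow_left₀ (by linarith : 0 ≤ x - s) (by linarith : x - s ≤ a + b) 2
          gcongr
  have hGamma := log_Gamma_le (x := x) (by linarith)
  have hmain := log_le_log (by positivity)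
    (pow_div_Gamma_le_mittagLeffler ha hb (z := s ^ a) (by positivity) k)
  rw [hterm] at hmain
  linarith [sq_nonneg (a + b)]

theorem tendsto_log_mittagLeffler_rpow_div (ha : 0 < a) (hb : 0 < b) :
    Tendsto (fun s => log (mittagLeffler a b (s ^ a)) / s) atTop (nhds 1) := by
  refine tendsto_order.2 ⟨fun c hc => ?_, fun c hc => ?_⟩
  · have hlower := tendsto_mul_add_mul_log_add_div 1 (-(b + 1)) (-(a + b + 1) ^ 2)
    filter_upwards [hlower.eventually (lt_mem_nhds hc), eventually_ge_atTop 2] with s hcs hs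
    refine hcs.trans_le (div_le_div_of_nonneg_right ?_ (by linarith))
    linarith [le_log_mittagLeffler_rpow ha hb hs]
  · obtain ⟨K, hK0, hK⟩ := exists_rpow_div_Gamma_le
    obtain ⟨l, hl, hlc⟩ := exists_between hc
    have hupper := tendsto_mul_add_mul_log_add_div l (2 - b)
      (log K + (2 - b) * log l - log (1 - (l ^ a)⁻¹))
    filter_upwards [hupper.eventually (gt_mem_nhds hlc),
      eventually_ge_atTop 1] with s hcs hs
    exact (div_le_div_of_nonneg_right (log_mittagLeffler_rpow_le hK0 hK ha hb hs hl)
      (by linarith)).trans_lt hcs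

end MittagLeffler

theorem mittagLeffler_log_asymptotics (a b C : ℝ) (ha : 0 < a) (hb : 0 < b) (hC : 0 < C) :
    Tendsto (fun t : ℝ => (1 / t) * Real.log (mittagLeffler a b (C * t ^ a)))
      atTop (nhds (C ^ (1 / a))) := by
  set L := C ^ (1 / a)
  have hL : 0 < L := rpow_pos_of_pos hC _
  have hLa : L ^ a = C := by rw [← rpow_mul hC.le, one_div_mul_cancel ha.ne', rpow_one]
  have hscaled := ((tendsto_log_mittagLeffler_rpow_div ha hb).comp
    (tendsto_id.const_mul_atTop hL)).const_mul L
  rw [mul_one] at hscaled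
  refine hscaled.congr' ?_
  filter_upwards [eventually_gt_atTop 0] with t ht
  simp only [Function.comp_apply, id, mul_rpow hL.le ht.le, hLa]
  field_simp
end

section
/- Let u₀, u₁ ∈ ℝ, λ ≠ 0 and ν > 0, and let t > 0. Then, writing x = λ² t² / √(2ν), one has u₀² E_2(x) + 2 u₀ u₁ t · E_{2,2}(x) + 2 u₁² t² · E_{2,3}(x) = −(2^{3/2} ν^{1/2} u₁²/λ²) + (u₀² + 2^{3/2} ν^{1/2} u₁²/λ²) · cosh(|λ| t/(2ν)^{1/4}) + (2^{5/4} ν^{1/4} u₀ u₁/|λ|) · sinh(|λ| t/(2ν)^{1/4}). -/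
open Nat Real

theorem mittagLeffler_two_one_sq (s : ℝ) : mittagLeffler 2 1 (s ^ 2) = cosh s := by
  rw [mittagLeffler, cosh_eq_tsum]
  congr 1 with k
  rw [show (2 : ℝ) * k + 1 = ↑(2 * k) + 1 by push_cast; ring, Gamma_nat_eq_factorial, ← pow_mul]

theorem mul_mittagLeffler_two_two_sq (s : ℝ) : s * mittagLeffler 2 2 (s ^ 2) = sinh s := by
  rw [mittagLeffler, ← tsum_mul_left, sinh_eq_tsum]
  congr 1 with k
  rw [show (2 : ℝ) * k + 2 = ↑(2 * k + 1) + 1 by push_cast; ring, Gamma_nat_eq_factorial,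
    ← pow_mul, _root_.pow_succ', mul_div_assoc]

theorem sq_mul_mittagLeffler_two_three_sq (s : ℝ) :
    s ^ 2 * mittagLeffler 2 3 (s ^ 2) = cosh s - 1 := by
  rw [mittagLeffler, ← tsum_mul_left, cosh_eq_tsum, (hasSum_cosh s).summable.tsum_eq_zero_add]
  simp only [mul_zero, pow_zero, factorial_zero, cast_one, div_one, add_sub_cancel_left]
  congr 1 with k
  rw [show (2 : ℝ) * k + 3 = ↑(2 * (k + 1)) + 1 by push_cast; ring, Gamma_nat_eq_factorial,
    ← pow_mul, mul_add_one, pow_add]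
  ring

theorem two_rpow_one_add_mul_rpow {ν : ℝ} (hν : 0 ≤ ν) (p : ℝ) :
    (2 : ℝ) ^ (1 + p) * ν ^ p = 2 * (2 * ν) ^ p := by
  rw [rpow_add two_pos, rpow_one, mul_rpow zero_le_two hν, mul_assoc]

theorem rpow_quarter_sq {x : ℝ} (hx : 0 ≤ x) : (x ^ (1 / 4 : ℝ)) ^ 2 = x ^ (1 / 2 : ℝ) := by
  rw [← rpow_natCast, ← rpow_mul hx]
  norm_num

theorem swe_second_moment_hyperbolic_form_general
    (u₀ u₁ lam ν t : ℝ) (hlam : lam ≠ 0) (hν : 0 < ν) :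
    u₀ ^ 2 * mittagLeffler 2 1 (lam ^ 2 * t ^ 2 / Real.sqrt (2 * ν))
      + 2 * u₀ * u₁ * t * mittagLeffler 2 2 (lam ^ 2 * t ^ 2 / Real.sqrt (2 * ν))
      + 2 * u₁ ^ 2 * t ^ 2 * mittagLeffler 2 3 (lam ^ 2 * t ^ 2 / Real.sqrt (2 * ν)) =
    -((2:ℝ) ^ ((3:ℝ) / 2) * ν ^ ((1:ℝ) / 2) * u₁ ^ 2 / lam ^ 2)
      + (u₀ ^ 2 + (2:ℝ) ^ ((3:ℝ) / 2) * ν ^ ((1:ℝ) / 2) * u₁ ^ 2 / lam ^ 2) *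
          Real.cosh (|lam| * t / (2 * ν) ^ ((1:ℝ) / 4))
      + ((2:ℝ) ^ ((5:ℝ) / 4) * ν ^ ((1:ℝ) / 4) * u₀ * u₁ / |lam|) *
          Real.sinh (|lam| * t / (2 * ν) ^ ((1:ℝ) / 4)) := by
  have h2ν : 0 ≤ 2 * ν := by positivity
  set c := (2 * ν) ^ (1 / 4 : ℝ) with hc_def
  have hc : 0 < c := by positivity
  have habs : |lam| ≠ 0 := abs_ne_zero.mpr hlam
  rw [show (3 : ℝ) / 2 = 1 + 1 / 2 by norm_num, show (5 : ℝ) / 4 = 1 + 1 / 4 by norm_num,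
    two_rpow_one_add_mul_rpow hν.le, two_rpow_one_add_mul_rpow hν.le, sqrt_eq_rpow,
    ← rpow_quarter_sq h2ν, ← hc_def, ← sq_abs lam]
  obtain ⟨s, rfl⟩ : ∃ s, t = c * s / |lam| := ⟨|lam| * t / c, by field_simp⟩
  have harg : |lam| * (c * s / |lam|) / c = s := by field_simp
  have hx : |lam| ^ 2 * (c * s / |lam|) ^ 2 / c ^ 2 = s ^ 2 := by field_simp
  rw [harg, hx, mittagLeffler_two_one_sq]
  linear_combination (2 * u₀ * u₁ * c / |lam|) * mul_mittagLeffler_two_two_sq s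
    + (2 * u₁ ^ 2 * c ^ 2 / |lam| ^ 2) * sq_mul_mittagLeffler_two_three_sq s

theorem swe_second_moment_hyperbolic_form
    (u₀ u₁ lam ν t : ℝ) (hlam : lam ≠ 0) (hν : 0 < ν) (ht : 0 < t) :
    u₀ ^ 2 * mittagLeffler 2 1 (lam ^ 2 * t ^ 2 / Real.sqrt (2 * ν))
      + 2 * u₀ * u₁ * t * mittagLeffler 2 2 (lam ^ 2 * t ^ 2 / Real.sqrt (2 * ν))
      + 2 * u₁ ^ 2 * t ^ 2 * mittagLeffler 2 3 (lam ^ 2 * t ^ 2 / Real.sqrt (2 * ν)) =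
    -((2:ℝ) ^ ((3:ℝ) / 2) * ν ^ ((1:ℝ) / 2) * u₁ ^ 2 / lam ^ 2)
      + (u₀ ^ 2 + (2:ℝ) ^ ((3:ℝ) / 2) * ν ^ ((1:ℝ) / 2) * u₁ ^ 2 / lam ^ 2) *
          Real.cosh (|lam| * t / (2 * ν) ^ ((1:ℝ) / 4))
      + ((2:ℝ) ^ ((5:ℝ) / 4) * ν ^ ((1:ℝ) / 4) * u₀ * u₁ / |lam|) *
          Real.sinh (|lam| * t / (2 * ν) ^ ((1:ℝ) / 4)) :=
  swe_second_moment_hyperbolic_form_general u₀ u₁ lam ν t hlam hν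
end
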